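/- arXiv:1402.3692 — 15 statements merged into one kernel-verified Lean document; each statement's English description precedes it below -/
import Mathlib

section
/- Let C be a real constant and let t, t₁ : J → ℝ be twice differentiable functions on an open interval J ⊆ ℝ satisfying the semi-discrete Liouville chain t₁'(x) = t'(x) + C·exp((t(x)+t₁(x))/2) for all x ∈ J. Then for all x ∈ J one has t₁''(x) − (1/2)·t₁'(x)² = t''(x) − (1/2)·t'(x)², i.e. the function I = t_{xx} − (1/2)t_x² takes the same value on t₁ as on t (it is an n-integral of the chain t_{1x} = t_x + C e^{(t+t₁)/2}). -/
/-- `I = t_{xx} - (1/2) t_x²` is an n-integral of the semi-discrete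
Liouville chain `t_{1x} = t_x + C e^{(t+t₁)/2}`. -/
theorem stmt_0 (C : ℝ) (J : Set ℝ) (hJ : IsOpen J) (hJc : J.OrdConnected)
    (t t₁ : ℝ → ℝ)
    (ht : ∀ x ∈ J, DifferentiableAt ℝ t x)
    (ht' : ∀ x ∈ J, DifferentiableAt ℝ (deriv t) x)
    (ht₁ : ∀ x ∈ J, DifferentiableAt ℝ t₁ x)
    (ht₁' : ∀ x ∈ J, DifferentiableAt ℝ (deriv t₁) x)
    (hchain : ∀ x ∈ J, deriv t₁ x = deriv t x + C * Real.exp ((t x + t₁ x) / 2)) :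
    ∀ x ∈ J, deriv (deriv t₁) x - (1/2) * (deriv t₁ x)^2
      = deriv (deriv t) x - (1/2) * (deriv t x)^2 := by
  intro x hx
  have hmem := hJ.mem_nhds hx
  have heq : deriv t₁ =ᶠ[nhds x] fun y => deriv t y + C * Real.exp ((t y + t₁ y) / 2) :=
    Filter.eventuallyEq_of_mem hmem hchain
  have h1 : HasDerivAt (fun y => (t y + t₁ y) / 2) ((deriv t x + deriv t₁ x) / 2) x :=
    ((ht x hx).hasDerivAt.add (ht₁ x hx).hasDerivAt).div_const 2
  have hE : HasDerivAt (fun y => C * Real.exp ((t y + t₁ y) / 2))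
      (C * (Real.exp ((t x + t₁ x) / 2) * ((deriv t x + deriv t₁ x) / 2))) x :=
    (h1.exp).const_mul C
  have hD : HasDerivAt (fun y => deriv t y + C * Real.exp ((t y + t₁ y) / 2))
      (deriv (deriv t) x + C * (Real.exp ((t x + t₁ x) / 2) * ((deriv t x + deriv t₁ x) / 2))) x :=
    (ht' x hx).hasDerivAt.add hE
  have hderiv : deriv (deriv t₁) x
      = deriv (deriv t) x + C * (Real.exp ((t x + t₁ x) / 2) * ((deriv t x + deriv t₁ x) / 2)) := by
    rw [Filter.EventuallyEq.deriv_eq heq]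
    exact hD.deriv
  have hc := hchain x hx
  rw [hderiv, hc]
  ring
end

section
/- Let C be a real constant and let t, t₁, t₂ : J → ℝ be differentiable functions on an open interval J ⊆ ℝ satisfying t₁'(x) = t'(x) + C·exp((t(x)+t₁(x))/2) and t₂'(x) = t₁'(x) + C·exp((t₁(x)+t₂(x))/2) for all x ∈ J. Then the function F(x) = exp((t₁(x)−t(x))/2) + exp((t₁(x)−t₂(x))/2) has zero derivative at every point of J (F is an x-integral of the chain t_{1x} = t_x + C e^{(t+t₁)/2}). -/
/-!
Along one link `v' = u' + C e^{(u+v)/2}` of the chain, `e^{(v-u)/2}` has derivative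
`(C/2) e^v` and `e^{(u-v)/2}` has derivative `-(C/2) e^u`. Applied to the links `(t, t₁)` and
`(t₁, t₂)`, both summands of `F` pick up `± (C/2) e^{t₁}`, which cancel.
-/

open Real

section ChainLink

variable {u v : ℝ → ℝ} {u' C x : ℝ}

theorem hasDerivAt_exp_half_sub_of_chain (hu : HasDerivAt u u' x)
    (hv : HasDerivAt v (u' + C * exp ((u x + v x) / 2)) x) :
    HasDerivAt (fun y => exp ((v y - u y) / 2)) (C / 2 * exp (v x)) x := by
  convert ((hv.fun_sub hu).div_const 2).exp using 1
  have hexp : exp (v x) = exp ((v x - u x) / 2) * exp ((u x + v x) / 2) := by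
    rw [← exp_add]; ring_nf
  rw [hexp]; ring

theorem hasDerivAt_exp_half_sub_of_chain' (hu : HasDerivAt u u' x)
    (hv : HasDerivAt v (u' + C * exp ((u x + v x) / 2)) x) :
    HasDerivAt (fun y => exp ((u y - v y) / 2)) (-(C / 2) * exp (u x)) x := by
  convert ((hu.fun_sub hv).div_const 2).exp using 1
  have hexp : exp (u x) = exp ((u x - v x) / 2) * exp ((u x + v x) / 2) := by
    rw [← exp_add]; ring_nf
  rw [hexp]; ring

end ChainLink

theorem stmt_1_general (C : ℝ) (J : Set ℝ)
    (t t₁ t₂ : ℝ → ℝ)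
    (ht : ∀ x ∈ J, DifferentiableAt ℝ t x)
    (ht₁ : ∀ x ∈ J, DifferentiableAt ℝ t₁ x)
    (ht₂ : ∀ x ∈ J, DifferentiableAt ℝ t₂ x)
    (hchain1 : ∀ x ∈ J, deriv t₁ x = deriv t x + C * Real.exp ((t x + t₁ x) / 2))
    (hchain2 : ∀ x ∈ J, deriv t₂ x = deriv t₁ x + C * Real.exp ((t₁ x + t₂ x) / 2)) :
    ∀ x ∈ J, deriv (fun y => Real.exp ((t₁ y - t y) / 2)
      + Real.exp ((t₁ y - t₂ y) / 2)) x = 0 := by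
  intro x hx
  have Ht := (ht x hx).hasDerivAt
  have Ht₁ := (ht₁ x hx).hasDerivAt
  have Ht₂ := (ht₂ x hx).hasDerivAt
  have first := hasDerivAt_exp_half_sub_of_chain Ht (hchain1 x hx ▸ Ht₁)
  have second := hasDerivAt_exp_half_sub_of_chain' Ht₁ (hchain2 x hx ▸ Ht₂)
  rw [(first.fun_add second).deriv]
  ring

/-- `F = e^{(t₁-t)/2} + e^{(t₁-t₂)/2}` is an x-integral of the
semi-discrete Liouville chain `t_{1x} = t_x + C e^{(t+t₁)/2}`. -/
theorem stmt_1 (C : ℝ) (J : Set ℝ) (hJ : IsOpen J) (hJc : J.OrdConnected)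
    (t t₁ t₂ : ℝ → ℝ)
    (ht : ∀ x ∈ J, DifferentiableAt ℝ t x)
    (ht₁ : ∀ x ∈ J, DifferentiableAt ℝ t₁ x)
    (ht₂ : ∀ x ∈ J, DifferentiableAt ℝ t₂ x)
    (hchain1 : ∀ x ∈ J, deriv t₁ x = deriv t x + C * Real.exp ((t x + t₁ x) / 2))
    (hchain2 : ∀ x ∈ J, deriv t₂ x = deriv t₁ x + C * Real.exp ((t₁ x + t₂ x) / 2)) :
    ∀ x ∈ J, deriv (fun y => Real.exp ((t₁ y - t y) / 2)
      + Real.exp ((t₁ y - t₂ y) / 2)) x = 0 :=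
  stmt_1_general C J t t₁ t₂ ht ht₁ ht₂ hchain1 hchain2
end

section
/- Let t, t₁, t₂, t₃ : J → ℝ be differentiable functions on an open interval J ⊆ ℝ satisfying the chain equations t₁' = t' − e^t + e^{t₁}, t₂' = t₁' − e^{t₁} + e^{t₂}, t₃' = t₂' − e^{t₂} + e^{t₃} on J, and suppose e^{t(x)} − e^{t₃(x)} ≠ 0 and e^{t₁(x)} − e^{t₂(x)} ≠ 0 for all x ∈ J. Then the cross-ratio F(x) = (e^{t(x)} − e^{t₂(x)})(e^{t₁(x)} − e^{t₃(x)}) / ((e^{t(x)} − e^{t₃(x)})(e^{t₁(x)} − e^{t₂(x)})) has zero derivative at every point of J (F is an x-integral of the chain t_{1x} = t_x − e^t + e^{t₁}). -/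
/-!
Every `e^{t_k}` solves the same Riccati equation `p' = p (b + p)` with `b = t' - e^t`: for `t`
this is `(e^t)' = e^t t'`, and the chain equations telescope to `t_k' = t' - e^t + e^{t_k}`.
For two solutions of a Riccati equation `p' = c + b p + d p²` the difference satisfies
`(p - q)' = (p - q)(b + d (p + q))`, so the logarithmic derivatives of numerator and
denominator of the cross-ratio of four solutions are both `2b + d (p₀ + p₁ + p₂ + p₃)`,
and the cross-ratio is constant.
-/

open Real

section Riccati

variable {𝕜 : Type*} [NontriviallyNormedField 𝕜]

theorem HasDerivAt.sub_of_riccati {p q : 𝕜 → 𝕜} {b c d x : 𝕜}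
    (hp : HasDerivAt p (c + b * p x + d * p x ^ 2) x)
    (hq : HasDerivAt q (c + b * q x + d * q x ^ 2) x) :
    HasDerivAt (fun y => p y - q y) ((p x - q x) * (b + d * (p x + q x))) x :=
  (hp.sub hq).congr_deriv (by ring)

theorem hasDerivAt_crossRatio_of_riccati {p₀ p₁ p₂ p₃ : 𝕜 → 𝕜} {b c d x : 𝕜}
    (h₀ : HasDerivAt p₀ (c + b * p₀ x + d * p₀ x ^ 2) x)
    (h₁ : HasDerivAt p₁ (c + b * p₁ x + d * p₁ x ^ 2) x)
    (h₂ : HasDerivAt p₂ (c + b * p₂ x + d * p₂ x ^ 2) x)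
    (h₃ : HasDerivAt p₃ (c + b * p₃ x + d * p₃ x ^ 2) x)
    (hden : (p₀ x - p₃ x) * (p₁ x - p₂ x) ≠ 0) :
    HasDerivAt (fun y => (p₀ y - p₂ y) * (p₁ y - p₃ y) / ((p₀ y - p₃ y) * (p₁ y - p₂ y))) 0 x := by
  have hnum := (h₀.sub_of_riccati h₂).fun_mul (h₁.sub_of_riccati h₃)
  have hden' := (h₀.sub_of_riccati h₃).fun_mul (h₁.sub_of_riccati h₂)
  refine (hnum.fun_div hden' hden).congr_deriv ?_
  rw [div_eq_zero_iff]
  left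
  ring

end Riccati

theorem hasDerivAt_exp_comp_of_deriv_eq {f : ℝ → ℝ} {b x : ℝ} (hf : DifferentiableAt ℝ f x)
    (hderiv : deriv f x = b + exp (f x)) :
    HasDerivAt (fun y => exp (f y)) (0 + b * exp (f x) + 1 * exp (f x) ^ 2) x :=
  hf.hasDerivAt.exp.congr_deriv (by rw [hderiv]; ring)

theorem stmt_2_general (J : Set ℝ)
    (t t₁ t₂ t₃ : ℝ → ℝ)
    (ht : ∀ x ∈ J, DifferentiableAt ℝ t x)
    (ht₁ : ∀ x ∈ J, DifferentiableAt ℝ t₁ x)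
    (ht₂ : ∀ x ∈ J, DifferentiableAt ℝ t₂ x)
    (ht₃ : ∀ x ∈ J, DifferentiableAt ℝ t₃ x)
    (hchain1 : ∀ x ∈ J, deriv t₁ x = deriv t x - Real.exp (t x) + Real.exp (t₁ x))
    (hchain2 : ∀ x ∈ J, deriv t₂ x = deriv t₁ x - Real.exp (t₁ x) + Real.exp (t₂ x))
    (hchain3 : ∀ x ∈ J, deriv t₃ x = deriv t₂ x - Real.exp (t₂ x) + Real.exp (t₃ x))
    (hne1 : ∀ x ∈ J, Real.exp (t x) - Real.exp (t₃ x) ≠ 0)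
    (hne2 : ∀ x ∈ J, Real.exp (t₁ x) - Real.exp (t₂ x) ≠ 0) :
    ∀ x ∈ J, deriv (fun y =>
      (Real.exp (t y) - Real.exp (t₂ y)) * (Real.exp (t₁ y) - Real.exp (t₃ y))
        / ((Real.exp (t y) - Real.exp (t₃ y)) * (Real.exp (t₁ y) - Real.exp (t₂ y)))) x
      = 0 := by
  intro x hx
  have hd₀ : deriv t x = (deriv t x - exp (t x)) + exp (t x) := by ring
  have hd₁ : deriv t₁ x = (deriv t x - exp (t x)) + exp (t₁ x) := hchain1 x hx
  have hd₂ : deriv t₂ x = (deriv t x - exp (t x)) + exp (t₂ x) := by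
    rw [hchain2 x hx, hd₁]; ring
  have hd₃ : deriv t₃ x = (deriv t x - exp (t x)) + exp (t₃ x) := by
    rw [hchain3 x hx, hd₂]; ring
  exact (hasDerivAt_crossRatio_of_riccati
    (hasDerivAt_exp_comp_of_deriv_eq (ht x hx) hd₀) (hasDerivAt_exp_comp_of_deriv_eq (ht₁ x hx) hd₁)
    (hasDerivAt_exp_comp_of_deriv_eq (ht₂ x hx) hd₂) (hasDerivAt_exp_comp_of_deriv_eq (ht₃ x hx) hd₃)
    (mul_ne_zero (hne1 x hx) (hne2 x hx))).deriv

/-- the cross-ratio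
`F = (e^t - e^{t₂})(e^{t₁} - e^{t₃}) / ((e^t - e^{t₃})(e^{t₁} - e^{t₂}))`
is an x-integral of the chain `t_{1x} = t_x - e^t + e^{t₁}`. -/
theorem stmt_2 (J : Set ℝ) (hJ : IsOpen J) (hJc : J.OrdConnected)
    (t t₁ t₂ t₃ : ℝ → ℝ)
    (ht : ∀ x ∈ J, DifferentiableAt ℝ t x)
    (ht₁ : ∀ x ∈ J, DifferentiableAt ℝ t₁ x)
    (ht₂ : ∀ x ∈ J, DifferentiableAt ℝ t₂ x)
    (ht₃ : ∀ x ∈ J, DifferentiableAt ℝ t₃ x)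
    (hchain1 : ∀ x ∈ J, deriv t₁ x = deriv t x - Real.exp (t x) + Real.exp (t₁ x))
    (hchain2 : ∀ x ∈ J, deriv t₂ x = deriv t₁ x - Real.exp (t₁ x) + Real.exp (t₂ x))
    (hchain3 : ∀ x ∈ J, deriv t₃ x = deriv t₂ x - Real.exp (t₂ x) + Real.exp (t₃ x))
    (hne1 : ∀ x ∈ J, Real.exp (t x) - Real.exp (t₃ x) ≠ 0)
    (hne2 : ∀ x ∈ J, Real.exp (t₁ x) - Real.exp (t₂ x) ≠ 0) :
    ∀ x ∈ J, deriv (fun y =>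
      (Real.exp (t y) - Real.exp (t₂ y)) * (Real.exp (t₁ y) - Real.exp (t₃ y))
        / ((Real.exp (t y) - Real.exp (t₃ y)) * (Real.exp (t₁ y) - Real.exp (t₂ y)))) x
      = 0 :=
  stmt_2_general J t t₁ t₂ t₃ ht ht₁ ht₂ ht₃ hchain1 hchain2 hchain3 hne1 hne2
end

section
/- Let ε be a real constant and let t, t₁ : J → ℝ be twice differentiable functions on an open interval J ⊆ ℝ satisfying the chain t₁'(x) = (1 + ε e^{t₁(x)})·t'(x) for all x ∈ J, and suppose t'(x) ≠ 0 and 1 + ε e^{t₁(x)} ≠ 0 for all x ∈ J. Then for all x ∈ J one has t₁''(x)/t₁'(x) − t₁'(x) = t''(x)/t'(x) − t'(x), i.e. I = t_{xx}/t_x − t_x is an n-integral of the chain t_{1x} = (1 + ε e^{t₁}) t_x. -/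
/-- `I = t_{xx}/t_x - t_x` is an n-integral of the chain
`t_{1x} = (1 + ε e^{t₁}) t_x`. -/
theorem stmt_3 (ε : ℝ) (J : Set ℝ) (hJ : IsOpen J) (hJc : J.OrdConnected)
    (t t₁ : ℝ → ℝ)
    (ht : ∀ x ∈ J, DifferentiableAt ℝ t x)
    (ht' : ∀ x ∈ J, DifferentiableAt ℝ (deriv t) x)
    (ht₁ : ∀ x ∈ J, DifferentiableAt ℝ t₁ x)
    (ht₁' : ∀ x ∈ J, DifferentiableAt ℝ (deriv t₁) x)
    (htne : ∀ x ∈ J, deriv t x ≠ 0)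
    (hKne : ∀ x ∈ J, 1 + ε * Real.exp (t₁ x) ≠ 0)
    (hchain : ∀ x ∈ J, deriv t₁ x = (1 + ε * Real.exp (t₁ x)) * deriv t x) :
    ∀ x ∈ J, deriv (deriv t₁) x / deriv t₁ x - deriv t₁ x
      = deriv (deriv t) x / deriv t x - deriv t x := by
  intro x hx
  have hxn : J ∈ nhds x := hJ.mem_nhds hx
  have heq : deriv t₁ =ᶠ[nhds x] fun y => (1 + ε * Real.exp (t₁ y)) * deriv t y :=
    Filter.eventually_of_mem hxn hchain
  have hprod : HasDerivAt (fun y => (1 + ε * Real.exp (t₁ y)) * deriv t y)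
      ((0 + ε * (Real.exp (t₁ x) * deriv t₁ x)) * deriv t x
        + (1 + ε * Real.exp (t₁ x)) * deriv (deriv t) x) x :=
    (((hasDerivAt_const x (1:ℝ)).add (((ht₁ x hx).hasDerivAt.exp).const_mul ε)).mul
      (ht' x hx).hasDerivAt)
  have hd2 : deriv (deriv t₁) x
      = (0 + ε * (Real.exp (t₁ x) * deriv t₁ x)) * deriv t x
        + (1 + ε * Real.exp (t₁ x)) * deriv (deriv t) x := by
    rw [Filter.EventuallyEq.deriv_eq heq]
    exact hprod.deriv
  have hc := hchain x hx
  have hK := hKne x hx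
  have htn := htne x hx
  rw [hd2, hc]
  field_simp
  ring
end

section
/- Let ε be a real constant and let t, t₁ : J → ℝ be differentiable functions on an open interval J ⊆ ℝ satisfying the chain t₁'(x) = (1 + ε e^{t₁(x)})·t'(x) for all x ∈ J. Then the function F(x) = e^{t(x) − t₁(x)} + ε e^{t(x)} has zero derivative at every point of J (F is an x-integral of the chain t_{1x} = (1 + ε e^{t₁}) t_x). -/
/-- `F = e^{t - t₁} + ε e^t` is an x-integral of the chain
`t_{1x} = (1 + ε e^{t₁}) t_x`. -/
theorem stmt_4 (ε : ℝ) (J : Set ℝ) (hJ : IsOpen J) (hJc : J.OrdConnected)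
    (t t₁ : ℝ → ℝ)
    (ht : ∀ x ∈ J, DifferentiableAt ℝ t x)
    (ht₁ : ∀ x ∈ J, DifferentiableAt ℝ t₁ x)
    (hchain : ∀ x ∈ J, deriv t₁ x = (1 + ε * Real.exp (t₁ x)) * deriv t x) :
    ∀ x ∈ J, deriv (fun y => Real.exp (t y - t₁ y) + ε * Real.exp (t y)) x = 0 := by
  intro x hx
  have htd := (ht x hx).hasDerivAt
  have ht₁d := (ht₁ x hx).hasDerivAt
  have hF : HasDerivAt (fun y => Real.exp (t y - t₁ y) + ε * Real.exp (t y))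
      (Real.exp (t x - t₁ x) * (deriv t x - deriv t₁ x)
        + ε * (Real.exp (t x) * deriv t x)) x :=
    ((htd.sub ht₁d).exp).add ((htd.exp).const_mul ε)
  rw [hF.deriv, hchain x hx, Real.exp_sub]
  have h := Real.exp_ne_zero (t₁ x)
  field_simp
  ring
end

section
/- Let M be a real constant and let t, t₁ : J → ℝ be twice differentiable functions on an open interval J ⊆ ℝ such that for all x ∈ J: t(x) ≠ x, t₁(x) ≠ x, 1 + M·t(x) ≠ 0, 1 + M·t₁(x) ≠ 0, t'(x) ≠ 0, and the chain t₁'(x) = ((1 + M·t₁(x))(t₁(x) − x))/((1 + M·t(x))(t(x) − x)) · t'(x) holds. Then for all x ∈ J: t₁''(x)/t₁'(x) − 2t₁'(x)/(t₁(x) − x) + 1/(t₁(x) − x) = t''(x)/t'(x) − 2t'(x)/(t(x) − x) + 1/(t(x) − x). In other words, I = t_{xx}/t_x − 2t_x/(t − x) + 1/(t − x) is an n-integral of the chain t_{1x} = ((1 + t₁M(n))(t₁ − x))/((1 + tM(n))(t − x)) t_x. -/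
/-- `I = t_{xx}/t_x - 2t_x/(t-x) + 1/(t-x)` is an n-integral of the chain
`t_{1x} = ((1 + t₁ M)(t₁ - x))/((1 + t M)(t - x)) t_x`. -/
theorem stmt_9 (M : ℝ) (J : Set ℝ) (hJ : IsOpen J) (hJc : J.OrdConnected)
    (t t₁ : ℝ → ℝ)
    (ht : ∀ x ∈ J, DifferentiableAt ℝ t x)
    (ht' : ∀ x ∈ J, DifferentiableAt ℝ (deriv t) x)
    (ht₁ : ∀ x ∈ J, DifferentiableAt ℝ t₁ x)
    (ht₁' : ∀ x ∈ J, DifferentiableAt ℝ (deriv t₁) x)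
    (htx : ∀ x ∈ J, t x ≠ x)
    (ht₁x : ∀ x ∈ J, t₁ x ≠ x)
    (hMt : ∀ x ∈ J, 1 + M * t x ≠ 0)
    (hMt₁ : ∀ x ∈ J, 1 + M * t₁ x ≠ 0)
    (htne : ∀ x ∈ J, deriv t x ≠ 0)
    (hchain : ∀ x ∈ J, deriv t₁ x
      = ((1 + M * t₁ x) * (t₁ x - x)) / ((1 + M * t x) * (t x - x)) * deriv t x) :
    ∀ x ∈ J, deriv (deriv t₁) x / deriv t₁ x - 2 * deriv t₁ x / (t₁ x - x) + 1 / (t₁ x - x)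
      = deriv (deriv t) x / deriv t x - 2 * deriv t x / (t x - x) + 1 / (t x - x) := by
  intro x hx
  have hax : t x - x ≠ 0 := sub_ne_zero.mpr (htx x hx)
  have hbx : t₁ x - x ≠ 0 := sub_ne_zero.mpr (ht₁x x hx)
  have hA : 1 + M * t x ≠ 0 := hMt x hx
  have hB : 1 + M * t₁ x ≠ 0 := hMt₁ x hx
  have ha' : deriv t x ≠ 0 := htne x hx
  have hV : (1 + M * t x) * (t x - x) ≠ 0 := mul_ne_zero hA hax
  have hNz : (1 + M * t₁ x) * (t₁ x - x) ≠ 0 := mul_ne_zero hB hbx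
  -- derivatives
  have hbt : HasDerivAt t₁ (deriv t₁ x) x := (ht₁ x hx).hasDerivAt
  have hat : HasDerivAt t (deriv t x) x := (ht x hx).hasDerivAt
  have hdt : HasDerivAt (deriv t) (deriv (deriv t) x) x := (ht' x hx).hasDerivAt
  have hN : HasDerivAt (fun y => (1 + M * t₁ y) * (t₁ y - y))
      ((M * deriv t₁ x) * (t₁ x - x) + (1 + M * t₁ x) * (deriv t₁ x - 1)) x :=
    ((hbt.const_mul M).const_add 1).mul (hbt.sub (hasDerivAt_id x))
  have hVd : HasDerivAt (fun y => (1 + M * t y) * (t y - y))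
      ((M * deriv t x) * (t x - x) + (1 + M * t x) * (deriv t x - 1)) x :=
    ((hat.const_mul M).const_add 1).mul (hat.sub (hasDerivAt_id x))
  have hQ := (hN.div hVd hV).mul hdt
  have heq : deriv t₁ =ᶠ[nhds x] fun y =>
      ((1 + M * t₁ y) * (t₁ y - y)) / ((1 + M * t y) * (t y - y)) * deriv t y := by
    filter_upwards [hJ.mem_nhds hx] with y hy using hchain y hy
  have hd2 : deriv (deriv t₁) x =
      (((M * deriv t₁ x) * (t₁ x - x) + (1 + M * t₁ x) * (deriv t₁ x - 1)) *
          ((1 + M * t x) * (t x - x)) -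
        ((1 + M * t₁ x) * (t₁ x - x)) *
          ((M * deriv t x) * (t x - x) + (1 + M * t x) * (deriv t x - 1))) /
        ((1 + M * t x) * (t x - x)) ^ 2 * deriv t x +
      ((1 + M * t₁ x) * (t₁ x - x)) / ((1 + M * t x) * (t x - x)) *
        deriv (deriv t) x := by
    rw [heq.deriv_eq]; exact hQ.deriv
  have hc := hchain x hx
  have hb' : deriv t₁ x ≠ 0 := by
    rw [hc]; exact mul_ne_zero (div_ne_zero hNz hV) ha'
  rw [hd2, hc]
  rw [hc] at hb'
  field_simp
  ring
end

section
/- Let M, M₁ be real constants and let t, t₁, t₂ : J → ℝ be differentiable functions on an open interval J ⊆ ℝ such that for all x ∈ J: t(x) ≠ x, t₁(x) ≠ x, 1 + M·t(x) ≠ 0, 1 + M·t₁(x) ≠ 0, 1 + M₁·t₁(x) ≠ 0, t₁(x) ≠ t₂(x), and the chain equations t₁' = ((1 + M·t₁)(t₁ − x))/((1 + M·t)(t − x))·t' and t₂' = ((1 + M₁·t₂)(t₂ − x))/((1 + M₁·t₁)(t₁ − x))·t₁' hold. Then the function F(x) = (1 + M₁·t₂(x))(t₁(x) − t(x)) / ((1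 + M·t(x))(t₁(x) − t₂(x))) has zero derivative at every point of J. In other words, F = (1 + t₂M(n+1))(t₁ − t)/((1 + tM(n))(t₁ − t₂)) is an x-integral of the chain t_{1x} = ((1 + t₁M(n))(t₁ − x))/((1 + tM(n))(t − x)) t_x. -/
/-! By the quotient rule, `F' = 0` amounts to `N' D - N D' = 0` for `N = (1 + M₁ t₂)(t₁ - t)` and
`D = (1 + M t)(t₁ - t₂)`. Substituting the chain equations expresses `t₁'` and `t₂'` as multiples
of `t'`, and `N' D - N D'` then vanishes identically as a rational function of `x, t, t₁, t₂`. -/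

theorem deriv_div_eq_zero_of_hasDerivAt {f g : ℝ → ℝ} {f' g' x : ℝ}
    (hf : HasDerivAt f f' x) (hg : HasDerivAt g g' x) (hgx : g x ≠ 0)
    (hwronskian : f' * g x - f x * g' = 0) :
    deriv (fun y => f y / g y) x = 0 := by
  exact (hf.div hg hgx).deriv.trans (by rw [hwronskian, zero_div])

theorem chain_integral_wronskian_eq_zero {M M₁ x a a₁ a₂ d d₁ d₂ : ℝ}
    (ha : a ≠ x) (ha₁ : a₁ ≠ x) (hMa : 1 + M * a ≠ 0) (hM₁a₁ : 1 + M₁ * a₁ ≠ 0)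
    (hd₁ : d₁ = (1 + M * a₁) * (a₁ - x) / ((1 + M * a) * (a - x)) * d)
    (hd₂ : d₂ = (1 + M₁ * a₂) * (a₂ - x) / ((1 + M₁ * a₁) * (a₁ - x)) * d₁) :
    (M₁ * d₂ * (a₁ - a) + (1 + M₁ * a₂) * (d₁ - d)) * ((1 + M * a) * (a₁ - a₂))
      - (1 + M₁ * a₂) * (a₁ - a) * (M * d * (a₁ - a₂) + (1 + M * a) * (d₁ - d₂)) = 0 := by
  subst hd₂ hd₁
  field_simp [sub_ne_zero.2 ha, sub_ne_zero.2 ha₁]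
  ring

theorem stmt_10_general (M M₁ : ℝ) (J : Set ℝ)
    (t t₁ t₂ : ℝ → ℝ)
    (ht : ∀ x ∈ J, DifferentiableAt ℝ t x)
    (ht₁ : ∀ x ∈ J, DifferentiableAt ℝ t₁ x)
    (ht₂ : ∀ x ∈ J, DifferentiableAt ℝ t₂ x)
    (htx : ∀ x ∈ J, t x ≠ x)
    (ht₁x : ∀ x ∈ J, t₁ x ≠ x)
    (hMt : ∀ x ∈ J, 1 + M * t x ≠ 0)
    (hM₁t₁ : ∀ x ∈ J, 1 + M₁ * t₁ x ≠ 0)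
    (ht₁t₂ : ∀ x ∈ J, t₁ x ≠ t₂ x)
    (hchain1 : ∀ x ∈ J, deriv t₁ x
      = ((1 + M * t₁ x) * (t₁ x - x)) / ((1 + M * t x) * (t x - x)) * deriv t x)
    (hchain2 : ∀ x ∈ J, deriv t₂ x
      = ((1 + M₁ * t₂ x) * (t₂ x - x)) / ((1 + M₁ * t₁ x) * (t₁ x - x)) * deriv t₁ x) :
    ∀ x ∈ J, deriv (fun y =>
      (1 + M₁ * t₂ y) * (t₁ y - t y) / ((1 + M * t y) * (t₁ y - t₂ y))) x = 0 := by
  intro x hx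
  have h₀ := (ht x hx).hasDerivAt
  have h₁ := (ht₁ x hx).hasDerivAt
  have h₂ := (ht₂ x hx).hasDerivAt
  refine deriv_div_eq_zero_of_hasDerivAt
    (((h₂.const_mul M₁).const_add 1).mul (h₁.sub h₀))
    (((h₀.const_mul M).const_add 1).mul (h₁.sub h₂))
    (mul_ne_zero (hMt x hx) (sub_ne_zero.2 (ht₁t₂ x hx))) ?_
  exact chain_integral_wronskian_eq_zero (htx x hx) (ht₁x x hx) (hMt x hx) (hM₁t₁ x hx)
    (hchain1 x hx) (hchain2 x hx)

/-- `F = (1 + t₂ M(n+1))(t₁ - t)/((1 + t M(n))(t₁ - t₂))` is an x-integral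
of the chain `t_{1x} = ((1 + t₁ M(n))(t₁ - x))/((1 + t M(n))(t - x)) t_x`. -/
theorem stmt_10 (M M₁ : ℝ) (J : Set ℝ) (hJ : IsOpen J) (hJc : J.OrdConnected)
    (t t₁ t₂ : ℝ → ℝ)
    (ht : ∀ x ∈ J, DifferentiableAt ℝ t x)
    (ht₁ : ∀ x ∈ J, DifferentiableAt ℝ t₁ x)
    (ht₂ : ∀ x ∈ J, DifferentiableAt ℝ t₂ x)
    (htx : ∀ x ∈ J, t x ≠ x)
    (ht₁x : ∀ x ∈ J, t₁ x ≠ x)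
    (hMt : ∀ x ∈ J, 1 + M * t x ≠ 0)
    (hMt₁ : ∀ x ∈ J, 1 + M * t₁ x ≠ 0)
    (hM₁t₁ : ∀ x ∈ J, 1 + M₁ * t₁ x ≠ 0)
    (ht₁t₂ : ∀ x ∈ J, t₁ x ≠ t₂ x)
    (hchain1 : ∀ x ∈ J, deriv t₁ x
      = ((1 + M * t₁ x) * (t₁ x - x)) / ((1 + M * t x) * (t x - x)) * deriv t x)
    (hchain2 : ∀ x ∈ J, deriv t₂ x
      = ((1 + M₁ * t₂ x) * (t₂ x - x)) / ((1 + M₁ * t₁ x) * (t₁ x - x)) * deriv t₁ x) :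
    ∀ x ∈ J, deriv (fun y =>
      (1 + M₁ * t₂ y) * (t₁ y - t y) / ((1 + M * t y) * (t₁ y - t₂ y))) x = 0 :=
  stmt_10_general M M₁ J t t₁ t₂ ht ht₁ ht₂ htx ht₁x hMt hM₁t₁ ht₁t₂ hchain1 hchain2
end

section
/- Let D = {(x, t, t₁, p) ∈ ℝ⁴ : 0 < x, x < t, x < t₁, 0 < p} and let f : D → ℝ be a continuously differentiable positive function such that for all (x, t, t₁, p) ∈ D and all q ∈ ℝ: (f_x + f_t·p + f_{t₁}·f + f_p·q)/f − 2f/(t₁ − x) + 1/(t₁ − x) = q/p − 2p/(t − x) + 1/(t − x), where subscripts denote partial derivatives of f. Then there exist real constants a, b, not both zero, such that f(x, t, t₁, p)·(a + b·t)(t − x) = (a + b·t₁)(t₁ − x)·p for all (x, t, t₁, p) ∈ D. (Equivalently: every semi-discrete equation t_{1x} = f(x, n, t, t₁, t_x) possessing the n-integral I = t_{xx}/t_x − 2t_x/(t − x) + 1/(t − x) has, for each n, the form t_{1x} = ((1 + t₁M)(t₁ − x))/((1 + tM)(t − x)) t_x up to the projective normalization of the constant M.) -/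
/-!
Comparing the coefficients of `q` in the identity gives `p f_p = f`, so `f = p g(x, t, t₁)`;
comparing the coefficients of `p` then leaves two first-order PDEs for `g`. The first says that
`φ(t, t₁) = g (t - x) / (t₁ - x)` does not depend on `x`; the second, being affine in `x`, splits
into the Euler-type equations `∂₂φ (t₁ - t) = φ - 1` and `∂₁(1/φ) (t - t₁) = 1/φ - 1`.
A solution of `u'(s) (s - t) = u(s) - k` is affine, so `φ(t, ·)` and `1/φ(·, t₁)` are affine,
and this forces `φ(t, t₁) = A(t₁) / A(t)` with `A` affine.
-/

open Set Filter Topology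

section Euler

variable {S : Set ℝ} {u u' : ℝ → ℝ} {t k : ℝ}

lemma div_sub_eq_of_hasDerivAt_mul_sub_eq (hS : IsOpen S) (hSc : Convex ℝ S) (ht : t ∉ S)
    (hu : ∀ s ∈ S, HasDerivAt u (u' s) s) (h : ∀ s ∈ S, u' s * (s - t) = u s - k)
    {r s : ℝ} (hr : r ∈ S) (hs : s ∈ S) :
    (u r - k) / (r - t) = (u s - k) / (s - t) := by
  have hderiv : ∀ z ∈ S, HasDerivAt (fun z => (u z - k) / (z - t)) 0 z := by
    intro z hz
    have hzt : z - t ≠ 0 := sub_ne_zero.mpr fun e => ht (e ▸ hz)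
    have H := ((hu z hz).sub_const k).div ((hasDerivAt_id' z).sub_const t) hzt
    rwa [mul_one, h z hz, sub_self, zero_div] at H
  exact hS.is_const_of_deriv_eq_zero hSc.isPreconnected
    (fun z hz => (hderiv z hz).differentiableAt.differentiableWithinAt)
    (fun z hz => (hderiv z hz).deriv) hr hs

lemma eq_add_mul_sub_of_hasDerivAt_mul_sub_eq (hS : IsOpen S) (hSc : Convex ℝ S) (ht : t ∈ S)
    (hu : ∀ s ∈ S, HasDerivAt u (u' s) s) (h : ∀ s ∈ S, u' s * (s - t) = u s - k)
    {s : ℝ} (hs : s ∈ S) :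
    u s = k + u' t * (s - t) := by
  have hut : u t = k := sub_eq_zero.mp (by simpa using (h t ht).symm)
  -- On either side of `t` the slope of `u` at `t` is constant, so it equals `u' t`.
  have side : ∀ T ⊆ S, IsOpen T → Convex ℝ T → t ∉ T → ∀ l : Filter ℝ, l.NeBot →
      l ≤ 𝓝[≠] t → T ∈ l → s ∈ T → u s = k + u' t * (s - t) := by
    intro T hTS hT hTc htT l _ hl hTl hsT
    have hconst : ∀ r ∈ T, slope u t r = (u s - k) / (s - t) := fun r hr => by
      rw [slope_def_field, hut]
      exact div_sub_eq_of_hasDerivAt_mul_sub_eq hT hTc htT (fun z hz => hu z (hTS hz))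
        (fun z hz => h z (hTS hz)) hr hsT
    have hlim : Tendsto (slope u t) l (𝓝 (u' t)) :=
      (hasDerivAt_iff_tendsto_slope.mp (hu t ht)).mono_left hl
    have hK := tendsto_nhds_unique
      (tendsto_const_nhds.congr' (eventually_of_mem hTl fun r hr => (hconst r hr).symm)) hlim
    have hst : s - t ≠ 0 := sub_ne_zero.mpr fun e => htT (e ▸ hsT)
    rw [← hK]
    field_simp
    ring
  have hnhds : S ∈ 𝓝 t := hS.mem_nhds ht
  rcases lt_trichotomy s t with hlt | rfl | hgt
  · exact side (S ∩ Iio t) inter_subset_left (hS.inter isOpen_Iio) (hSc.inter (convex_Iio t))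
      (fun hT => lt_irrefl t hT.2) (𝓝[<] t) inferInstance
      (nhdsWithin_mono _ fun r hr => ne_of_lt hr)
      (inter_mem (mem_nhdsWithin_of_mem_nhds hnhds) self_mem_nhdsWithin) ⟨hs, hlt⟩
  · rw [hut, sub_self, mul_zero, add_zero]
  · exact side (S ∩ Ioi t) inter_subset_left (hS.inter isOpen_Ioi) (hSc.inter (convex_Ioi t))
      (fun hT => lt_irrefl t hT.2) (𝓝[>] t) inferInstance
      (nhdsWithin_mono _ fun r hr => ne_of_gt hr)
      (inter_mem (mem_nhdsWithin_of_mem_nhds hnhds) self_mem_nhdsWithin) ⟨hs, hgt⟩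

end Euler

lemma mul_affine_eq_affine_of_affine_of_inv_affine {φ : ℝ → ℝ → ℝ} {C D : ℝ → ℝ}
    (hC : ∀ t s, 0 < t → 0 < s → φ t s = 1 + C t * (s - t))
    (hD : ∀ t s, 0 < t → 0 < s → φ t s * (1 + D s * (t - s)) = 1) {t s : ℝ}
    (ht : 0 < t) (hs : 0 < s) :
    φ t s * (1 + C 1 * (t - 1)) = 1 + C 1 * (s - 1) := by
  set c := C 1
  have hCt : C t * (1 + c * (t - 1)) = c := by
    have e₁ := hD t (t + 1) ht (by linarith)
    have e₂ := hD 1 (t + 1) one_pos (by linarith)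
    rw [hC t (t + 1) ht (by linarith)] at e₁
    rw [hC 1 (t + 1) one_pos (by linarith)] at e₂
    have hD' : D (t + 1) * (1 + c * t) = c := by
      have : t * (c - D (t + 1) * (1 + c * t)) = 0 := by linear_combination e₂
      linarith [(mul_eq_zero.mp this).resolve_left ht.ne']
    linear_combination (1 + c * t) * e₁ + (1 + C t) * hD'
  rw [hC t s ht hs]
  linear_combination (s - t) * hCt

lemma exists_mul_affine_eq_affine_of_euler {φ : ℝ → ℝ → ℝ}
    (hφ : ∀ t s, 0 < t → 0 < s → 0 < φ t s)
    (hl : ∀ t s, 0 < t → 0 < s → DifferentiableAt ℝ (fun u => φ u s) t)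
    (hr : ∀ t s, 0 < t → 0 < s → DifferentiableAt ℝ (fun u => φ t u) s)
    (hE : ∀ t s, 0 < t → 0 < s → deriv (fun u => φ t u) s * (s - t) = φ t s - 1)
    (hF : ∀ t s, 0 < t → 0 < s → deriv (fun u => φ u s) t * (t - s) = φ t s ^ 2 - φ t s) :
    ∃ c : ℝ, ∀ t s, 0 < t → 0 < s → φ t s * (1 + c * (t - 1)) = 1 + c * (s - 1) := by
  have hC : ∀ t s, 0 < t → 0 < s → φ t s = 1 + deriv (fun u => φ t u) t * (s - t) :=
    fun t s ht hs => eq_add_mul_sub_of_hasDerivAt_mul_sub_eq isOpen_Ioi (convex_Ioi 0)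
      (mem_Ioi.mpr ht) (fun s hs => (hr t s ht hs).hasDerivAt) (fun s hs => hE t s ht hs)
      (mem_Ioi.mpr hs)
  -- `1 / φ` satisfies in its first argument the equation that `φ` satisfies in its second.
  have hD : ∀ t s, 0 < t → 0 < s →
      (φ t s)⁻¹ = 1 + (-deriv (fun u => φ u s) s / φ s s ^ 2) * (t - s) := by
    intro t s ht hs
    refine eq_add_mul_sub_of_hasDerivAt_mul_sub_eq (u := fun u => (φ u s)⁻¹) isOpen_Ioi
      (convex_Ioi 0) (mem_Ioi.mpr hs)
      (fun r hr => (hl r s hr hs).hasDerivAt.inv (hφ r s hr hs).ne') (fun r hr => ?_)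
      (mem_Ioi.mpr ht)
    have := (hφ r s hr hs).ne'
    field_simp
    linear_combination -hF r s hr hs
  exact ⟨_, fun t s ht hs => mul_affine_eq_affine_of_affine_of_inv_affine hC
    (fun t s ht hs => by rw [← hD t s ht hs, mul_inv_cancel₀ (hφ t s ht hs).ne']) ht hs⟩

/-- The equations that the n-integral imposes on `g x t t₁ = f x t t₁ 1` once
`f x t t₁ p = p * g x t t₁`. -/
structure ReducedSystem (g : ℝ → ℝ → ℝ → ℝ) : Prop where
  pos : ∀ x t t₁ : ℝ, 0 < x → x < t → x < t₁ → 0 < g x t t₁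
  differentiableAt_x :
    ∀ x t t₁ : ℝ, 0 < x → x < t → x < t₁ → DifferentiableAt ℝ (fun u => g u t t₁) x
  differentiableAt_t :
    ∀ x t t₁ : ℝ, 0 < x → x < t → x < t₁ → DifferentiableAt ℝ (fun u => g x u t₁) t
  differentiableAt_t₁ :
    ∀ x t t₁ : ℝ, 0 < x → x < t → x < t₁ → DifferentiableAt ℝ (fun u => g x t u) t₁
  pde_x : ∀ x t t₁ : ℝ, 0 < x → x < t → x < t₁ →
    deriv (fun u => g u t t₁) x * ((t - x) * (t₁ - x)) = g x t t₁ * (t₁ - t)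
  pde_t : ∀ x t t₁ : ℝ, 0 < x → x < t → x < t₁ →
    (deriv (fun u => g x u t₁) t + deriv (fun u => g x t u) t₁ * g x t t₁)
        * ((t - x) * (t₁ - x))
      = 2 * g x t t₁ * (g x t t₁ * (t - x) - (t₁ - x))

/-- The quantity `g x t t₁ * (t - x) / (t₁ - x)`, independent of `x` by
`ReducedSystem.reduced_eq`, sampled at `x = min t t₁ / 2`. -/
noncomputable def reduced (g : ℝ → ℝ → ℝ → ℝ) (t t₁ : ℝ) : ℝ :=
  g (min t t₁ / 2) t t₁ * (t - min t t₁ / 2) / (t₁ - min t t₁ / 2)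

lemma half_min_mem {t t₁ : ℝ} (ht : 0 < t) (ht₁ : 0 < t₁) :
    0 < min t t₁ / 2 ∧ min t t₁ / 2 < t ∧ min t t₁ / 2 < t₁ := by
  have := lt_min ht ht₁
  exact ⟨by linarith, by linarith [min_le_left t t₁], by linarith [min_le_right t t₁]⟩

namespace ReducedSystem

variable {g : ℝ → ℝ → ℝ → ℝ} {x t t₁ : ℝ}

lemma reduced_eq (h : ReducedSystem g) (hx : 0 < x) (hxt : x < t) (hxt₁ : x < t₁) :
    g x t t₁ * (t - x) / (t₁ - x) = reduced g t t₁ := by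
  have hderiv : ∀ y ∈ Ioo 0 (min t t₁),
      HasDerivAt (fun u => g u t t₁ * (t - u) / (t₁ - u)) 0 y := by
    rintro y ⟨hy, hym⟩
    have hyt := hym.trans_le (min_le_left t t₁)
    have hyt₁ := hym.trans_le (min_le_right t t₁)
    refine (((h.differentiableAt_x y t t₁ hy hyt hyt₁).hasDerivAt.mul
      ((hasDerivAt_id' y).const_sub t)).div ((hasDerivAt_id' y).const_sub t₁)
      (sub_ne_zero.mpr hyt₁.ne')).congr_deriv ?_
    rw [div_eq_zero_iff, Pi.mul_apply]
    left
    linear_combination h.pde_x y t t₁ hy hyt hyt₁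
  have hm : 0 < min t t₁ := lt_min (hx.trans hxt) (hx.trans hxt₁)
  exact isOpen_Ioo.is_const_of_deriv_eq_zero (convex_Ioo _ _).isPreconnected
    (fun y hy => (hderiv y hy).differentiableAt.differentiableWithinAt)
    (fun y hy => (hderiv y hy).deriv) ⟨hx, lt_min hxt hxt₁⟩ ⟨by linarith, by linarith⟩

lemma hasDerivAt_reduced_left (h : ReducedSystem g) (hx : 0 < x) (hxt : x < t)
    (hxt₁ : x < t₁) :
    HasDerivAt (fun u => reduced g u t₁)
      ((deriv (fun u => g x u t₁) t * (t - x) + g x t t₁) / (t₁ - x)) t := by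
  refine ((((h.differentiableAt_t x t t₁ hx hxt hxt₁).hasDerivAt.mul
    ((hasDerivAt_id' t).sub_const x)).div_const (t₁ - x)).congr_deriv
    (by ring)).congr_of_eventuallyEq ?_
  filter_upwards [Ioi_mem_nhds hxt] with u hu
  exact (h.reduced_eq hx hu hxt₁).symm

lemma hasDerivAt_reduced_right (h : ReducedSystem g) (hx : 0 < x) (hxt : x < t)
    (hxt₁ : x < t₁) :
    HasDerivAt (fun u => reduced g t u)
      ((deriv (fun u => g x t u) t₁ * (t₁ - x) - g x t t₁) * (t - x) / (t₁ - x) ^ 2) t₁ := by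
  refine ((((h.differentiableAt_t₁ x t t₁ hx hxt hxt₁).hasDerivAt.mul_const (t - x)).div
    ((hasDerivAt_id' t₁).sub_const x) (sub_ne_zero.mpr hxt₁.ne')).congr_deriv
    (by ring)).congr_of_eventuallyEq ?_
  filter_upwards [Ioi_mem_nhds hxt₁] with u hu
  exact (h.reduced_eq hx hxt hu).symm

lemma reduced_pos (h : ReducedSystem g) (ht : 0 < t) (ht₁ : 0 < t₁) : 0 < reduced g t t₁ :=
  let ⟨hx, hxt, hxt₁⟩ := half_min_mem ht ht₁
  div_pos (mul_pos (h.pos _ t t₁ hx hxt hxt₁) (sub_pos.mpr hxt)) (sub_pos.mpr hxt₁)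

lemma reduced_pde (h : ReducedSystem g) (hx : 0 < x) (hxt : x < t) (hxt₁ : x < t₁) :
    deriv (fun u => reduced g u t₁) t * (t - x)
        + reduced g t t₁ * deriv (fun u => reduced g t u) t₁ * (t₁ - x)
      = reduced g t t₁ ^ 2 - reduced g t t₁ := by
  rw [(h.hasDerivAt_reduced_left hx hxt hxt₁).deriv,
    (h.hasDerivAt_reduced_right hx hxt hxt₁).deriv, ← h.reduced_eq hx hxt hxt₁]
  have hU : t₁ - x ≠ 0 := sub_ne_zero.mpr hxt₁.ne'
  field_simp
  linear_combination (t - x) * h.pde_t x t t₁ hx hxt hxt₁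

lemma reduced_euler (h : ReducedSystem g) (ht : 0 < t) (ht₁ : 0 < t₁) :
    deriv (fun u => reduced g t u) t₁ * (t₁ - t) = reduced g t t₁ - 1 ∧
      deriv (fun u => reduced g u t₁) t * (t - t₁) = reduced g t t₁ ^ 2 - reduced g t t₁ := by
  set φ := reduced g t t₁
  set P := deriv (fun u => reduced g u t₁) t
  set Q := φ * deriv (fun u => reduced g t u) t₁
  have hm : 0 < min t t₁ := lt_min ht ht₁
  have hmt := min_le_left t t₁
  have hmt₁ := min_le_right t t₁
  -- `reduced_pde` is affine in `x`; comparing two values of `x` splits it in two.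
  have e₁ := h.reduced_pde (x := min t t₁ / 2) (t := t) (t₁ := t₁) (by linarith) (by linarith)
    (by linarith)
  have e₂ := h.reduced_pde (x := min t t₁ / 4) (t := t) (t₁ := t₁) (by linarith) (by linarith)
    (by linarith)
  have hPQ : P + Q = 0 := by
    have : (P + Q) * (min t t₁ / 4) = 0 := by linear_combination e₂ - e₁
    exact (mul_eq_zero.mp this).resolve_right (by positivity)
  have hQ : φ * (deriv (fun u => reduced g t u) t₁ * (t₁ - t) - (φ - 1)) = 0 := by
    linear_combination e₁ - (t - min t t₁ / 2) * hPQ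
  have hE := sub_eq_zero.mp ((mul_eq_zero.mp hQ).resolve_left (h.reduced_pos ht ht₁).ne')
  exact ⟨hE, by linear_combination (t - t₁) * hPQ + φ * hE⟩

lemma exists_mul_affine_eq (h : ReducedSystem g) :
    ∃ c : ℝ, ∀ x t t₁ : ℝ, 0 < x → x < t → x < t₁ →
      g x t t₁ * ((1 + c * (t - 1)) * (t - x)) = (1 + c * (t₁ - 1)) * (t₁ - x) := by
  obtain ⟨c, hc⟩ := exists_mul_affine_eq_affine_of_euler (fun t t₁ => h.reduced_pos)
    (fun t t₁ ht ht₁ => let ⟨hx, hxt, hxt₁⟩ := half_min_mem ht ht₁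
      (h.hasDerivAt_reduced_left hx hxt hxt₁).differentiableAt)
    (fun t t₁ ht ht₁ => let ⟨hx, hxt, hxt₁⟩ := half_min_mem ht ht₁
      (h.hasDerivAt_reduced_right hx hxt hxt₁).differentiableAt)
    (fun t t₁ ht ht₁ => (h.reduced_euler ht ht₁).1) (fun t t₁ ht ht₁ => (h.reduced_euler ht ht₁).2)
  refine ⟨c, fun x t t₁ hx hxt hxt₁ => ?_⟩
  have hU : t₁ - x ≠ 0 := sub_ne_zero.mpr hxt₁.ne'
  rw [← hc t t₁ (hx.trans hxt) (hx.trans hxt₁), ← h.reduced_eq hx hxt hxt₁]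
  field_simp

end ReducedSystem

lemma differentiableAt_partials_of_contDiffOn {f : ℝ → ℝ → ℝ → ℝ → ℝ}
    (hf : ContDiffOn ℝ 1 (fun v : ℝ × ℝ × ℝ × ℝ => f v.1 v.2.1 v.2.2.1 v.2.2.2)
      {v : ℝ × ℝ × ℝ × ℝ | 0 < v.1 ∧ v.1 < v.2.1 ∧ v.1 < v.2.2.1 ∧ 0 < v.2.2.2})
    {x t t₁ p : ℝ} (hx : 0 < x) (hxt : x < t) (hxt₁ : x < t₁) (hp : 0 < p) :
    DifferentiableAt ℝ (fun u => f u t t₁ p) x ∧ DifferentiableAt ℝ (fun u => f x u t₁ p) t ∧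
      DifferentiableAt ℝ (fun u => f x t u p) t₁ ∧ DifferentiableAt ℝ (fun u => f x t t₁ u) p := by
  have hopen :
      IsOpen {v : ℝ × ℝ × ℝ × ℝ | 0 < v.1 ∧ v.1 < v.2.1 ∧ v.1 < v.2.2.1 ∧ 0 < v.2.2.2} := by
    apply_rules [IsOpen.and, isOpen_lt] <;> fun_prop
  have hd := (hf.differentiableOn one_ne_zero).differentiableAt
    (hopen.mem_nhds (x := (x, t, t₁, p)) ⟨hx, hxt, hxt₁, hp⟩)
  exact ⟨hd.comp (f := fun u => (u, t, t₁, p)) x (by fun_prop),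
    hd.comp (f := fun u => (x, u, t₁, p)) t (by fun_prop),
    hd.comp (f := fun u => (x, t, u, p)) t₁ (by fun_prop),
    hd.comp (f := fun u => (x, t, t₁, u)) p (by fun_prop)⟩

/-- `D I = I` for `I = t_xx / t_x - 2 t_x / (t - x) + 1 / (t - x)`, with `t_x = p`, `t_xx = q`
and `t_{1x} = f x t t₁ p`. -/
def HasNIntegral (f : ℝ → ℝ → ℝ → ℝ → ℝ) : Prop :=
  ∀ x t t₁ p : ℝ, 0 < x → x < t → x < t₁ → 0 < p → ∀ q : ℝ,
    (deriv (fun x' => f x' t t₁ p) x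
      + deriv (fun u => f x u t₁ p) t * p
      + deriv (fun u => f x t u p) t₁ * f x t t₁ p
      + deriv (fun u => f x t t₁ u) p * q) / f x t t₁ p
      - 2 * f x t t₁ p / (t₁ - x) + 1 / (t₁ - x)
    = q / p - 2 * p / (t - x) + 1 / (t - x)

namespace HasNIntegral

variable {f : ℝ → ℝ → ℝ → ℝ → ℝ} {x t t₁ p : ℝ}

lemma deriv_mul_eq (hI : HasNIntegral f)
    (hpos : ∀ x t t₁ p : ℝ, 0 < x → x < t → x < t₁ → 0 < p → 0 < f x t t₁ p)
    (hx : 0 < x) (hxt : x < t) (hxt₁ : x < t₁) (hp : 0 < p) :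
    deriv (fun u => f x t t₁ u) p * p = f x t t₁ p := by
  have hf := (hpos x t t₁ p hx hxt hxt₁ hp).ne'
  have hq := hI x t t₁ p hx hxt hxt₁ hp p
  have h0 := hI x t t₁ p hx hxt hxt₁ hp 0
  rw [div_self hp.ne'] at hq
  rw [mul_zero, add_zero, zero_div] at h0
  have key : deriv (fun u => f x t t₁ u) p * p / f x t t₁ p = 1 := by
    linear_combination hq - h0
  exact (div_eq_one_iff_eq hf).mp key

lemma eq_mul_one (hI : HasNIntegral f)
    (hpos : ∀ x t t₁ p : ℝ, 0 < x → x < t → x < t₁ → 0 < p → 0 < f x t t₁ p)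
    (hdiff : ∀ p, 0 < p → DifferentiableAt ℝ (fun u => f x t t₁ u) p)
    (hx : 0 < x) (hxt : x < t) (hxt₁ : x < t₁) (hp : 0 < p) :
    f x t t₁ p = p * f x t t₁ 1 := by
  have h := div_sub_eq_of_hasDerivAt_mul_sub_eq isOpen_Ioi (convex_Ioi 0) (lt_irrefl (0 : ℝ))
    (fun s hs => (hdiff s hs).hasDerivAt) (k := 0)
    (fun s hs => by rw [sub_zero, sub_zero]; exact hI.deriv_mul_eq hpos hx hxt hxt₁ hs)
    (mem_Ioi.mpr hp) (mem_Ioi.mpr one_pos)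
  simp only [sub_zero, div_one] at h
  rw [← h, mul_div_cancel₀ _ hp.ne']

lemma pde (hI : HasNIntegral f)
    (hpos : ∀ x t t₁ p : ℝ, 0 < x → x < t → x < t₁ → 0 < p → 0 < f x t t₁ p)
    (hhom : ∀ x t t₁ p : ℝ, 0 < x → x < t → x < t₁ → 0 < p → f x t t₁ p = p * f x t t₁ 1)
    (hx : 0 < x) (hxt : x < t) (hxt₁ : x < t₁) :
    deriv (fun u => f u t t₁ 1) x * ((t - x) * (t₁ - x)) = f x t t₁ 1 * (t₁ - t) ∧
      (deriv (fun u => f x u t₁ 1) t + deriv (fun u => f x t u 1) t₁ * f x t t₁ 1)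
          * ((t - x) * (t₁ - x))
        = 2 * f x t t₁ 1 * (f x t t₁ 1 * (t - x) - (t₁ - x)) := by
  have hdx : deriv (fun u => f u t t₁ 2) x = 2 * deriv (fun u => f u t t₁ 1) x := by
    rw [← deriv_const_mul_field]
    refine EventuallyEq.deriv_eq ?_
    filter_upwards [Ioo_mem_nhds hx (lt_min hxt hxt₁)] with u hu
    exact hhom u t t₁ 2 hu.1 (hu.2.trans_le (min_le_left _ _))
      (hu.2.trans_le (min_le_right _ _)) two_pos
  have hdt : deriv (fun u => f x u t₁ 2) t = 2 * deriv (fun u => f x u t₁ 1) t := by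
    rw [← deriv_const_mul_field]
    refine EventuallyEq.deriv_eq ?_
    filter_upwards [Ioi_mem_nhds hxt] with u hu
    exact hhom x u t₁ 2 hx hu hxt₁ two_pos
  have hdt₁ : deriv (fun u => f x t u 2) t₁ = 2 * deriv (fun u => f x t u 1) t₁ := by
    rw [← deriv_const_mul_field]
    refine EventuallyEq.deriv_eq ?_
    filter_upwards [Ioi_mem_nhds hxt₁] with u hu
    exact hhom x t u 2 hx hxt hu two_pos
  have hG := (hpos x t t₁ 1 hx hxt hxt₁ one_pos).ne'
  have htx : t - x ≠ 0 := sub_ne_zero.mpr hxt.ne'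
  have ht₁x : t₁ - x ≠ 0 := sub_ne_zero.mpr hxt₁.ne'
  -- With `q = 0` the identity is affine in `p`; the values `p = 1, 2` give both coefficients.
  have e₁ := hI x t t₁ 1 hx hxt hxt₁ one_pos 0
  have e₂ := hI x t t₁ 2 hx hxt hxt₁ two_pos 0
  rw [hdx, hdt, hdt₁, hhom x t t₁ 2 hx hxt hxt₁ two_pos] at e₂
  field_simp at e₁ e₂
  exact ⟨by linear_combination 2 * e₁ - e₂ / 2, by linear_combination e₂ / 2 - e₁⟩

lemma reducedSystem (hI : HasNIntegral f)
    (hf : ContDiffOn ℝ 1 (fun v : ℝ × ℝ × ℝ × ℝ => f v.1 v.2.1 v.2.2.1 v.2.2.2)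
      {v : ℝ × ℝ × ℝ × ℝ | 0 < v.1 ∧ v.1 < v.2.1 ∧ v.1 < v.2.2.1 ∧ 0 < v.2.2.2})
    (hpos : ∀ x t t₁ p : ℝ, 0 < x → x < t → x < t₁ → 0 < p → 0 < f x t t₁ p)
    (hhom : ∀ x t t₁ p : ℝ, 0 < x → x < t → x < t₁ → 0 < p → f x t t₁ p = p * f x t t₁ 1) :
    ReducedSystem (fun x t t₁ => f x t t₁ 1) where
  pos x t t₁ hx hxt hxt₁ := hpos x t t₁ 1 hx hxt hxt₁ one_pos
  differentiableAt_x _ _ _ hx hxt hxt₁ :=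
    (differentiableAt_partials_of_contDiffOn hf hx hxt hxt₁ one_pos).1
  differentiableAt_t _ _ _ hx hxt hxt₁ :=
    (differentiableAt_partials_of_contDiffOn hf hx hxt hxt₁ one_pos).2.1
  differentiableAt_t₁ _ _ _ hx hxt hxt₁ :=
    (differentiableAt_partials_of_contDiffOn hf hx hxt hxt₁ one_pos).2.2.1
  pde_x _ _ _ hx hxt hxt₁ := (hI.pde hpos hhom hx hxt hxt₁).1
  pde_t _ _ _ hx hxt hxt₁ := (hI.pde hpos hhom hx hxt hxt₁).2

end HasNIntegral

/-- every semi-discrete equation `t_{1x} = f(x,n,t,t₁,t_x)` possessing the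
n-integral `I = t_{xx}/t_x - 2t_x/(t-x) + 1/(t-x)` has the form
`t_{1x} = ((1+t₁M)(t₁-x))/((1+tM)(t-x)) t_x` up to projective normalization of `M`. -/
theorem stmt_11 (f : ℝ → ℝ → ℝ → ℝ → ℝ)
    (hf : ContDiffOn ℝ 1 (fun v : ℝ × ℝ × ℝ × ℝ => f v.1 v.2.1 v.2.2.1 v.2.2.2)
      {v : ℝ × ℝ × ℝ × ℝ | 0 < v.1 ∧ v.1 < v.2.1 ∧ v.1 < v.2.2.1 ∧ 0 < v.2.2.2})
    (hpos : ∀ x t t₁ p : ℝ, 0 < x → x < t → x < t₁ → 0 < p → 0 < f x t t₁ p)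
    (hI : ∀ x t t₁ p : ℝ, 0 < x → x < t → x < t₁ → 0 < p → ∀ q : ℝ,
      (deriv (fun x' => f x' t t₁ p) x
        + deriv (fun u => f x u t₁ p) t * p
        + deriv (fun u => f x t u p) t₁ * f x t t₁ p
        + deriv (fun u => f x t t₁ u) p * q) / f x t t₁ p
        - 2 * f x t t₁ p / (t₁ - x) + 1 / (t₁ - x)
      = q / p - 2 * p / (t - x) + 1 / (t - x)) :
    ∃ a b : ℝ, (a, b) ≠ (0, 0) ∧ ∀ x t t₁ p : ℝ, 0 < x → x < t → x < t₁ → 0 < p →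
      f x t t₁ p * ((a + b * t) * (t - x)) = (a + b * t₁) * (t₁ - x) * p := by
  have hI : HasNIntegral f := hI
  have hhom : ∀ x t t₁ p : ℝ, 0 < x → x < t → x < t₁ → 0 < p → f x t t₁ p = p * f x t t₁ 1 :=
    fun x t t₁ p hx hxt hxt₁ hp => hI.eq_mul_one hpos
      (fun s hs => (differentiableAt_partials_of_contDiffOn hf hx hxt hxt₁ hs).2.2.2)
      hx hxt hxt₁ hp
  obtain ⟨c, hc⟩ := (hI.reducedSystem hf hpos hhom).exists_mul_affine_eq
  refine ⟨1 - c, c, fun h => ?_, fun x t t₁ p hx hxt hxt₁ hp => ?_⟩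
  · obtain ⟨h₁, h₂⟩ := Prod.mk.inj h
    linarith
  · rw [hhom x t t₁ p hx hxt hxt₁ hp]
    linear_combination p * hc x t t₁ hx hxt hxt₁
end

section
/- Let ε > 0, let n be an integer, let C be a real constant, and let J ⊆ ℝ be an open interval with x + εn > 0 for all x ∈ J. Let t, t₁ : J → ℝ be twice differentiable functions such that for all x ∈ J: t'(x) > 0, ε(t₁(x) − t(x)) + C > 0, and the chain t₁'(x) = (√(t'(x)) + α(x))² holds, where α(x) = √( (ε(t₁(x) − t(x)) + C) / ((x + εn)(x + ε(n+1))) ). Then for all x ∈ J: t₁'(x) > 0 and t₁''(x)/√(t₁'(x)) + 2√(t₁'(x))/(x + ε(n+1)) = t''(x)/√(t'(x)) + 2√(t'(x))/(x + εn). In other words, I = t_{xx}/√(t_x) + 2√(t_x)/(x + εn) is an n-integral of the chain t_{1x} = (√(t_x) + α)². -/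
/-!
Write `s = √t_x`, `α` for the square root in the chain and `a = x + εn`, `b = x + ε(n+1)`.
Near a point of `J` the chain says `√t_{1x} = s + α`, so `t_{1xx}/√t_{1x} = 2(s + α)_x` and
`t_{xx}/√t_x = 2 s_x`; the invariance of `I` thus amounts to `α_x = s/a - (s + α)/b`. This follows
by differentiating `α² (x + εn)(x + ε(n+1)) = ε(t₁ - t) + C`, using `t_{1x} - t_x = α(2s + α)` from
the chain and `b - a = ε`.
-/

open Filter Topology

theorem deriv_div_sqrt_of_eventuallyEq_sq {f g : ℝ → ℝ} {g' x : ℝ}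
    (hfg : f =ᶠ[𝓝 x] fun y => g y ^ 2) (hg : HasDerivAt g g' x) (hgx : 0 < g x) :
    deriv f x / √(f x) = 2 * g' := by
  have hf : HasDerivAt f (2 * g x * g') x := by
    simpa using (hg.pow 2).congr_of_eventuallyEq hfg
  rw [hf.deriv, hfg.eq_of_nhds, Real.sqrt_sq hgx.le]
  field_simp

theorem hasDerivAt_div_mul_add {p : ℝ → ℝ} {p' x c d : ℝ} (hp : HasDerivAt p p' x)
    (hc : x + c ≠ 0) (hd : x + d ≠ 0) :
    HasDerivAt (fun y => p y / ((y + c) * (y + d)))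
      (p' / ((x + c) * (x + d)) - p x / ((x + c) * (x + d)) * (1 / (x + c) + 1 / (x + d))) x := by
  have hq := hp.div (((hasDerivAt_id x).add_const c).mul ((hasDerivAt_id x).add_const d))
    (mul_ne_zero hc hd)
  refine hq.congr_deriv ?_
  simp only [id, Pi.mul_apply]
  field_simp

theorem div_two_mul_eq_of_sub_eq {s α a b ε : ℝ} (hα : α ≠ 0) (ha : a ≠ 0) (hb : b ≠ 0)
    (hba : b - a = ε) :
    (ε * ((s + α) ^ 2 - s ^ 2) / (a * b) - α ^ 2 * (1 / a + 1 / b)) / (2 * α)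
      = s / a - (s + α) / b := by
  subst hba
  field_simp
  ring

theorem stmt_12_general (ε : ℝ) (hε : 0 < ε) (n : ℤ) (C : ℝ) (J : Set ℝ)
    (hJ : IsOpen J)
    (hJpos : ∀ x ∈ J, 0 < x + ε * (n : ℝ))
    (t t₁ : ℝ → ℝ)
    (ht : ∀ x ∈ J, DifferentiableAt ℝ t x)
    (ht' : ∀ x ∈ J, DifferentiableAt ℝ (deriv t) x)
    (ht₁ : ∀ x ∈ J, DifferentiableAt ℝ t₁ x)
    (htpos : ∀ x ∈ J, 0 < deriv t x)
    (hCpos : ∀ x ∈ J, 0 < ε * (t₁ x - t x) + C)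
    (hchain : ∀ x ∈ J, deriv t₁ x = (Real.sqrt (deriv t x)
      + Real.sqrt ((ε * (t₁ x - t x) + C)
          / ((x + ε * (n : ℝ)) * (x + ε * ((n : ℝ) + 1)))))^2) :
    ∀ x ∈ J, 0 < deriv t₁ x ∧
      deriv (deriv t₁) x / Real.sqrt (deriv t₁ x)
          + 2 * Real.sqrt (deriv t₁ x) / (x + ε * ((n : ℝ) + 1))
        = deriv (deriv t) x / Real.sqrt (deriv t x)
          + 2 * Real.sqrt (deriv t x) / (x + ε * (n : ℝ)) := by
  intro x hx
  set a := x + ε * (n : ℝ)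
  set b := x + ε * ((n : ℝ) + 1)
  have ha : 0 < a := hJpos x hx
  have hba : b - a = ε := by ring
  have hb : 0 < b := by linarith
  set s := √(deriv t x)
  set α := √((ε * (t₁ x - t x) + C) / (a * b))
  have hs : 0 < s := Real.sqrt_pos.mpr (htpos x hx)
  have hα2 : α ^ 2 = (ε * (t₁ x - t x) + C) / (a * b) :=
    Real.sq_sqrt (div_pos (hCpos x hx) (mul_pos ha hb)).le
  have hα : 0 < α := Real.sqrt_pos.mpr (div_pos (hCpos x hx) (mul_pos ha hb))
  have hv : deriv t₁ x = (s + α) ^ 2 := hchain x hx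
  have hs2 : deriv t x = s ^ 2 := (Real.sq_sqrt (htpos x hx).le).symm
  have hsd : HasDerivAt (fun y => √(deriv t y)) (deriv (deriv t) x / (2 * s)) x :=
    (ht' x hx).hasDerivAt.sqrt (htpos x hx).ne'
  have hpd : HasDerivAt (fun y => ε * (t₁ y - t y) + C) (ε * ((s + α) ^ 2 - s ^ 2)) x := by
    rw [← hv, ← hs2]
    exact (((ht₁ x hx).hasDerivAt.sub (ht x hx).hasDerivAt).const_mul ε).add_const C
  have hαd : HasDerivAt (fun y => √((ε * (t₁ y - t y) + C)
      / ((y + ε * (n : ℝ)) * (y + ε * ((n : ℝ) + 1))))) (s / a - (s + α) / b) x := by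
    refine ((hasDerivAt_div_mul_add hpd ha.ne' hb.ne').sqrt
      (div_pos (hCpos x hx) (mul_pos ha hb)).ne').congr_deriv ?_
    change (_ - _ * (1 / a + 1 / b)) / (2 * α) = _
    rw [← hα2]
    exact div_two_mul_eq_of_sub_eq hα.ne' ha.ne' hb.ne' hba
  have hI₁ := deriv_div_sqrt_of_eventuallyEq_sq (eventually_of_mem (hJ.mem_nhds hx) hchain)
    (hsd.add hαd) (by positivity)
  have hsqrt : √(deriv t₁ x) = s + α := by rw [hv, Real.sqrt_sq (by positivity)]
  refine ⟨by rw [hv]; positivity, ?_⟩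
  rw [hI₁, hsqrt]
  field_simp
  ring

/-- `I = t_{xx}/√t_x + 2√t_x/(x + εn)` is an n-integral of the chain
`t_{1x} = (√t_x + α)²` with `α = √((ε(t₁-t)+C(n))/((x+εn)(x+ε(n+1))))`. -/
theorem stmt_12 (ε : ℝ) (hε : 0 < ε) (n : ℤ) (C : ℝ) (J : Set ℝ)
    (hJ : IsOpen J) (hJc : J.OrdConnected)
    (hJpos : ∀ x ∈ J, 0 < x + ε * (n : ℝ))
    (t t₁ : ℝ → ℝ)
    (ht : ∀ x ∈ J, DifferentiableAt ℝ t x)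
    (ht' : ∀ x ∈ J, DifferentiableAt ℝ (deriv t) x)
    (ht₁ : ∀ x ∈ J, DifferentiableAt ℝ t₁ x)
    (ht₁' : ∀ x ∈ J, DifferentiableAt ℝ (deriv t₁) x)
    (htpos : ∀ x ∈ J, 0 < deriv t x)
    (hCpos : ∀ x ∈ J, 0 < ε * (t₁ x - t x) + C)
    (hchain : ∀ x ∈ J, deriv t₁ x = (Real.sqrt (deriv t x)
      + Real.sqrt ((ε * (t₁ x - t x) + C)
          / ((x + ε * (n : ℝ)) * (x + ε * ((n : ℝ) + 1)))))^2) :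
    ∀ x ∈ J, 0 < deriv t₁ x ∧
      deriv (deriv t₁) x / Real.sqrt (deriv t₁ x)
          + 2 * Real.sqrt (deriv t₁ x) / (x + ε * ((n : ℝ) + 1))
        = deriv (deriv t) x / Real.sqrt (deriv t x)
          + 2 * Real.sqrt (deriv t x) / (x + ε * (n : ℝ)) :=
  stmt_12_general ε hε n C J hJ hJpos t t₁ ht ht' ht₁ htpos hCpos hchain
end

section
/- Let ε > 0, let n be an integer, let C, C₁ be real constants, and let J ⊆ ℝ be an open interval with x + εn > 0 for all x ∈ J. Let t, t₁, t₂ : J → ℝ be differentiable functions such that for all x ∈ J: t'(x) > 0, ε(t₁(x) − t(x)) + C > 0, ε(t₂(x) − t₁(x)) + C₁ > 0, and the chain equations t₁'(x) = (√(t'(x)) + α(x))² and t₂'(x) = (√(t₁'(x)) + β(x))² hold, where α(x) = √( (ε(t₁(x) − t(x)) + C) / ((x + εn)(x + ε(n+1))) ) and β(x) = √( (ε(t₂(x) − t₁(x)) + C₁) / ((x + ε(n+1))(x + ε(n+2))) ). Then the function F(x) = (x + εn)·α(x) − (x + ε(n+2))·β(x) has zero derivative at every point of J. In other words, F = (x +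 εn)α − (x + ε(n+2))Dα is an x-integral of the chain t_{1x} = (√(t_x) + α)². -/
/-!
Write `a = x + εn`, `b = a + ε`, `c = b + ε` and `s = √t'`. Along a solution,
`α² a b = ε (t₁ - t) + C` and `t₁' - t' = α (2s + α)`, so differentiating the first identity
gives `2 a b α' = ε (2s + α) - α (a + b)`. Since `√t₁' = s + α`, the same argument gives
`2 b c β' = ε (2s + 2α + β) - β (b + c)`, and then `F' = α + a α' - β - c β'` cancels to `0`
because `a = b - ε` and `c = b + ε`.
-/

theorem hasDerivAt_sqrt_ratio_of_chain {ε C p q x : ℝ} {t t₁ α : ℝ → ℝ}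
    (ht : DifferentiableAt ℝ t x) (ht₁ : DifferentiableAt ℝ t₁ x) (ht' : 0 ≤ deriv t x)
    (hP : 0 < ε * (t₁ x - t x) + C) (hp : 0 < x + p) (hq : 0 < x + q)
    (hα : ∀ y, α y = √((ε * (t₁ y - t y) + C) / ((y + p) * (y + q))))
    (hchain : deriv t₁ x = (√(deriv t x) + α x) ^ 2) :
    HasDerivAt α ((ε * (2 * √(deriv t x) + α x) - α x * (2 * x + p + q))
      / (2 * ((x + p) * (x + q)))) x := by
  have hpq : 0 < (x + p) * (x + q) := mul_pos hp hq
  have hratio := div_pos hP hpq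
  have hαx : 0 < α x := (hα x).symm ▸ Real.sqrt_pos.mpr hratio
  have hsq : ε * (t₁ x - t x) + C = α x ^ 2 * ((x + p) * (x + q)) := by
    rw [hα, Real.sq_sqrt hratio.le]; field_simp
  have hnum : HasDerivAt (fun y => ε * (t₁ y - t y) + C) (ε * (deriv t₁ x - deriv t x)) x :=
    ((ht₁.hasDerivAt.sub ht.hasDerivAt).const_mul ε).add_const C
  have hden : HasDerivAt (fun y => (y + p) * (y + q)) (1 * (x + q) + (x + p) * 1) x :=
    ((hasDerivAt_id' x).add_const p).mul ((hasDerivAt_id' x).add_const q)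
  refine (((hnum.div hden hpq.ne').sqrt hratio.ne').congr_of_eventuallyEq
    (.of_forall hα)).congr_deriv ?_
  rw [Pi.div_apply, ← hα x, hchain, add_sq, Real.sq_sqrt ht', hsq]
  field_simp
  ring

theorem stmt_13_general (ε : ℝ) (hε : 0 < ε) (n : ℤ) (C C₁ : ℝ) (J : Set ℝ)
    (hJpos : ∀ x ∈ J, 0 < x + ε * (n : ℝ))
    (t t₁ t₂ : ℝ → ℝ)
    (ht : ∀ x ∈ J, DifferentiableAt ℝ t x)
    (ht₁ : ∀ x ∈ J, DifferentiableAt ℝ t₁ x)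
    (ht₂ : ∀ x ∈ J, DifferentiableAt ℝ t₂ x)
    (htpos : ∀ x ∈ J, 0 < deriv t x)
    (hCpos : ∀ x ∈ J, 0 < ε * (t₁ x - t x) + C)
    (hC₁pos : ∀ x ∈ J, 0 < ε * (t₂ x - t₁ x) + C₁)
    (α β : ℝ → ℝ)
    (hα : ∀ x, α x = Real.sqrt ((ε * (t₁ x - t x) + C)
      / ((x + ε * (n : ℝ)) * (x + ε * ((n : ℝ) + 1)))))
    (hβ : ∀ x, β x = Real.sqrt ((ε * (t₂ x - t₁ x) + C₁)
      / ((x + ε * ((n : ℝ) + 1)) * (x + ε * ((n : ℝ) + 2)))))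
    (hchain1 : ∀ x ∈ J, deriv t₁ x = (Real.sqrt (deriv t x) + α x)^2)
    (hchain2 : ∀ x ∈ J, deriv t₂ x = (Real.sqrt (deriv t₁ x) + β x)^2) :
    ∀ x ∈ J, deriv (fun y =>
      (y + ε * (n : ℝ)) * α y - (y + ε * ((n : ℝ) + 2)) * β y) x = 0 := by
  intro x hx
  have ha := hJpos x hx
  have hb : 0 < x + ε * ((n : ℝ) + 1) := by rw [mul_add_one]; linarith
  have hc : 0 < x + ε * ((n : ℝ) + 2) := by rw [mul_add]; linarith
  have hsqrt₁ : √(deriv t₁ x) = √(deriv t x) + α x := by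
    rw [hchain1 x hx, Real.sqrt_sq (add_nonneg (Real.sqrt_nonneg _) ((hα x).symm ▸ Real.sqrt_nonneg _))]
  have hα' := hasDerivAt_sqrt_ratio_of_chain (ht x hx) (ht₁ x hx) (htpos x hx).le (hCpos x hx) ha hb hα
    (hchain1 x hx)
  have hβ' := hasDerivAt_sqrt_ratio_of_chain (ht₁ x hx) (ht₂ x hx) (by rw [hchain1 x hx]; positivity)
    (hC₁pos x hx) hb hc hβ (hchain2 x hx)
  rw [hsqrt₁] at hβ'
  have hF : HasDerivAt (fun y => (y + ε * (n : ℝ)) * α y - (y + ε * ((n : ℝ) + 2)) * β y) _ x :=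
    (((hasDerivAt_id' x).add_const _).mul hα').sub (((hasDerivAt_id' x).add_const _).mul hβ')
  rw [hF.deriv]
  field_simp
  ring

/-- `F = (x+εn)α - (x+ε(n+2))Dα` is an x-integral of the chain
`t_{1x} = (√t_x + α)²`. -/
theorem stmt_13 (ε : ℝ) (hε : 0 < ε) (n : ℤ) (C C₁ : ℝ) (J : Set ℝ)
    (hJ : IsOpen J) (hJc : J.OrdConnected)
    (hJpos : ∀ x ∈ J, 0 < x + ε * (n : ℝ))
    (t t₁ t₂ : ℝ → ℝ)
    (ht : ∀ x ∈ J, DifferentiableAt ℝ t x)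
    (ht₁ : ∀ x ∈ J, DifferentiableAt ℝ t₁ x)
    (ht₂ : ∀ x ∈ J, DifferentiableAt ℝ t₂ x)
    (htpos : ∀ x ∈ J, 0 < deriv t x)
    (hCpos : ∀ x ∈ J, 0 < ε * (t₁ x - t x) + C)
    (hC₁pos : ∀ x ∈ J, 0 < ε * (t₂ x - t₁ x) + C₁)
    (α β : ℝ → ℝ)
    (hα : ∀ x, α x = Real.sqrt ((ε * (t₁ x - t x) + C)
      / ((x + ε * (n : ℝ)) * (x + ε * ((n : ℝ) + 1)))))
    (hβ : ∀ x, β x = Real.sqrt ((ε * (t₂ x - t₁ x) + C₁)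
      / ((x + ε * ((n : ℝ) + 1)) * (x + ε * ((n : ℝ) + 2)))))
    (hchain1 : ∀ x ∈ J, deriv t₁ x = (Real.sqrt (deriv t x) + α x)^2)
    (hchain2 : ∀ x ∈ J, deriv t₂ x = (Real.sqrt (deriv t₁ x) + β x)^2) :
    ∀ x ∈ J, deriv (fun y =>
      (y + ε * (n : ℝ)) * α y - (y + ε * ((n : ℝ) + 2)) * β y) x = 0 :=
  stmt_13_general ε hε n C C₁ J hJpos t t₁ t₂ ht ht₁ ht₂ htpos hCpos hC₁pos α β hα hβ hchain1
    hchain2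
end

section
/- Let ε > 0, let n be an integer, and let J ⊆ ℝ be an open interval with x + εn > 0 for x ∈ J. Let D = {(x, t, t₁, p) : x ∈ J, t ∈ ℝ, t₁ ∈ ℝ, t < t₁, 0 < p} and let f : D → ℝ be a continuously differentiable positive function such that for all (x, t, t₁, p) ∈ D and all q ∈ ℝ: (f_x + f_t·p + f_{t₁}·f + f_p·q)/√f + 2√f/(x + ε(n+1)) = q/√p + 2√p/(x + εn), where subscripts denote partial derivatives of f and √ is the real nonnegative square root. Then there exists a constant C ≥ 0 such that (√(f(x,t,t₁,p)) − √p)² = (ε(t₁ − t) + C) / ((x + εn)(x + ε(n+1))) for all (x, t, t₁, p) ∈ D; equivalently, f(x,t,t₁,p) = (√p + √((ε(t₁ − t) + C)/((x + εn)(x + ε(n+1)))))². (This is the statement that every semi-discrete equation t_{1x} = f possessing the n-integral I = t_{xx}/√(t_x) + 2√(t_x)/(x + εn) is of the form (53).) -/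
/-!
Comparing the coefficients of `q` in the identity gives `f_p = √f / √p`, so `√f - √p` does not
depend on `p`: `√f = √p + g(x, t, t₁)`, with `g ≥ 0` because `f > 0` at `p = g²`. Putting
`q = 0` and `p = s²`, the identity becomes a quadratic polynomial in `s` vanishing for all
`s > 0`; its coefficients give `g_t = -g_{t₁}`, `2 g g_{t₁} = 1/(x+εn) - 1/(x+ε(n+1))` and
`g_x + g_{t₁} g² + g/(x+ε(n+1)) = 0`. These say exactly that `(x+εn)(x+ε(n+1)) g² - ε(t₁-t)`
has vanishing partial derivatives, hence is a constant `C`, and `C ≥ 0` because it is bounded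
below by `-ε(t₁-t)` with `t₁ - t` arbitrarily small.
-/

open Real Filter Topology Set

lemma eq_of_hasDerivAt_zero {w : ℝ → ℝ} {s : Set ℝ} (hs : IsOpen s) (hs' : IsPreconnected s)
    (hw : ∀ x ∈ s, HasDerivAt w 0 x) {x y : ℝ} (hx : x ∈ s) (hy : y ∈ s) : w x = w y :=
  hs.is_const_of_deriv_eq_zero hs'
    (fun z hz => (hw z hz).differentiableAt.differentiableWithinAt)
    (fun z hz => (hw z hz).deriv) hx hy

lemma eq_of_hasDerivAt_zero_of_lt {φ : ℝ → ℝ → ℝ}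
    (h₁ : ∀ t t₁, t < t₁ → HasDerivAt (φ · t₁) 0 t)
    (h₂ : ∀ t t₁, t < t₁ → HasDerivAt (φ t ·) 0 t₁)
    {t t₁ s s₁ : ℝ} (ht : t < t₁) (hs : s < s₁) : φ t t₁ = φ s s₁ := by
  set M := max t₁ s₁ + 1
  have htM : t₁ < M := by linarith [le_max_left t₁ s₁]
  have hsM : s₁ < M := by linarith [le_max_right t₁ s₁]
  calc φ t t₁ = φ t M :=
        eq_of_hasDerivAt_zero isOpen_Ioi isPreconnected_Ioi (fun z hz => h₂ t z hz) ht
          (ht.trans htM)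
    _ = φ s M :=
        eq_of_hasDerivAt_zero isOpen_Iio isPreconnected_Iio (fun z hz => h₁ z M hz)
          (ht.trans htM) (hs.trans hsM)
    _ = φ s s₁ :=
        eq_of_hasDerivAt_zero isOpen_Ioi isPreconnected_Ioi (fun z hz => h₂ s z hz)
          (hs.trans hsM) hs

lemma coeffs_eq_zero_of_forall_pos {c₀ c₁ c₂ : ℝ}
    (h : ∀ s : ℝ, 0 < s → c₀ + c₁ * s + c₂ * s ^ 2 = 0) : c₀ = 0 ∧ c₁ = 0 ∧ c₂ = 0 := by
  have h₁ := h 1 one_pos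
  have h₂ := h 2 two_pos
  have h₃ := h 3 three_pos
  refine ⟨?_, ?_, ?_⟩
  · linear_combination 3 * h₁ - 3 * h₂ + h₃
  · linear_combination (-5 * h₁ + 8 * h₂ - 3 * h₃) / 2
  · linear_combination (h₁ - 2 * h₂ + h₃) / 2

lemma sqrt_sub_sqrt_eq_of_hasDerivAt {g : ℝ → ℝ} (hg : ∀ p, 0 < p → 0 < g p)
    (hd : ∀ p, 0 < p → HasDerivAt g (√(g p) / √p) p) {p p' : ℝ} (hp : 0 < p) (hp' : 0 < p') :
    √(g p) - √p = √(g p') - √p' := by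
  refine eq_of_hasDerivAt_zero (w := fun p => √(g p) - √p) isOpen_Ioi isPreconnected_Ioi
    (fun z (hz : 0 < z) => ?_) hp hp'
  have hgz : √(g z) ≠ 0 := (sqrt_pos.2 (hg z hz)).ne'
  have hz' : √z ≠ 0 := (sqrt_pos.2 hz).ne'
  refine (((hd z hz).sqrt (hg z hz).ne').sub (hasDerivAt_sqrt hz.ne')).congr_deriv ?_
  field_simp
  ring

lemma nonneg_of_forall_sqrt_add_pos {c : ℝ} (h : ∀ p, 0 < p → 0 < √p + c) : 0 ≤ c := by
  by_contra! hc
  have := h (c ^ 2) (sq_pos_of_neg hc)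
  rw [sqrt_sq_eq_abs, abs_of_neg hc] at this
  linarith

lemma differentiableAt_slices {f : ℝ → ℝ → ℝ → ℝ → ℝ} {x t t₁ p : ℝ}
    (hf : DifferentiableAt ℝ (fun v : ℝ × ℝ × ℝ × ℝ => f v.1 v.2.1 v.2.2.1 v.2.2.2)
      (x, t, t₁, p)) :
    DifferentiableAt ℝ (f · t t₁ p) x ∧ DifferentiableAt ℝ (f x · t₁ p) t ∧
      DifferentiableAt ℝ (f x t · p) t₁ ∧ DifferentiableAt ℝ (f x t t₁ ·) p :=
  ⟨hf.comp x (f := fun u => (u, t, t₁, p)) (by fun_prop),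
    hf.comp t (f := fun u => (x, u, t₁, p)) (by fun_prop),
    hf.comp t₁ (f := fun u => (x, t, u, p)) (by fun_prop),
    hf.comp p (f := fun u => (x, t, t₁, u)) (by fun_prop)⟩

lemma deriv_eq_of_eventuallyEq_sq {h g : ℝ → ℝ} {c d z : ℝ} (hg : HasDerivAt g d z)
    (hh : h =ᶠ[𝓝 z] fun y => (c + g y) ^ 2) : deriv h z = 2 * (c + g z) * d := by
  rw [(((hg.const_add c).pow 2).congr_of_eventuallyEq hh).deriv]
  simp

lemma isOpen_setOf_mem_and_lt_and_pos {J : Set ℝ} (hJ : IsOpen J) :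
    IsOpen {v : ℝ × ℝ × ℝ × ℝ | v.1 ∈ J ∧ v.2.1 < v.2.2.1 ∧ 0 < v.2.2.2} :=
  (hJ.preimage continuous_fst).inter ((isOpen_lt continuous_snd.fst continuous_snd.snd.fst).inter
    (isOpen_lt continuous_const continuous_snd.snd.snd))

/-- `f` is positive and differentiable on `x ∈ J`, `t < t₁`, `p > 0`, and the chain
`t_{1x} = f(x, t, t₁, t_x)` has the n-integral `I = t_xx/√t_x + 2√t_x/(x+εn)`: the field `eq` is
`D I = I` written with `t_x = p`, `t_xx = q`. -/
structure HasNIntegral_s14 (ε : ℝ) (n : ℤ) (J : Set ℝ) (f : ℝ → ℝ → ℝ → ℝ → ℝ) : Prop where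
  pos : ∀ x t t₁ p : ℝ, x ∈ J → t < t₁ → 0 < p → 0 < f x t t₁ p
  differentiableAt : ∀ x t t₁ p : ℝ, x ∈ J → t < t₁ → 0 < p →
    DifferentiableAt ℝ (fun v : ℝ × ℝ × ℝ × ℝ => f v.1 v.2.1 v.2.2.1 v.2.2.2) (x, t, t₁, p)
  eq : ∀ x t t₁ p : ℝ, x ∈ J → t < t₁ → 0 < p → ∀ q : ℝ,
    (deriv (fun x' => f x' t t₁ p) x
      + deriv (fun u => f x u t₁ p) t * p
      + deriv (fun u => f x t u p) t₁ * f x t t₁ p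
      + deriv (fun u => f x t t₁ u) p * q) / Real.sqrt (f x t t₁ p)
      + 2 * Real.sqrt (f x t t₁ p) / (x + ε * ((n : ℝ) + 1))
    = q / Real.sqrt p + 2 * Real.sqrt p / (x + ε * (n : ℝ))

/-- `√f - √p`, which turns out not to depend on `p`. -/
noncomputable def sqrtExcess (f : ℝ → ℝ → ℝ → ℝ → ℝ) (x t t₁ : ℝ) : ℝ := √(f x t t₁ 1) - 1

noncomputable def excessInvariant (ε : ℝ) (n : ℤ) (f : ℝ → ℝ → ℝ → ℝ → ℝ) (x t t₁ : ℝ) : ℝ :=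
  (x + ε * n) * (x + ε * (n + 1)) * sqrtExcess f x t t₁ ^ 2 - ε * (t₁ - t)

namespace HasNIntegral_s14

variable {ε : ℝ} {n : ℤ} {J : Set ℝ} {f : ℝ → ℝ → ℝ → ℝ → ℝ} {x t t₁ p : ℝ}

lemma deriv_p_eq (h : HasNIntegral_s14 ε n J f) (hx : x ∈ J) (ht : t < t₁) (hp : 0 < p) :
    deriv (f x t t₁ ·) p = √(f x t t₁ p) / √p := by
  have hf : √(f x t t₁ p) ≠ 0 := (sqrt_pos.2 (h.pos x t t₁ p hx ht hp)).ne'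
  have hp' : √p ≠ 0 := (sqrt_pos.2 hp).ne'
  have hcoeff : deriv (f x t t₁ ·) p / √(f x t t₁ p) = 1 / √p := by
    linear_combination h.eq x t t₁ p hx ht hp 1 - h.eq x t t₁ p hx ht hp 0
  field_simp at hcoeff ⊢
  exact hcoeff

lemma sqrt_eq_sqrt_add (h : HasNIntegral_s14 ε n J f) (hx : x ∈ J) (ht : t < t₁) (hp : 0 < p) :
    √(f x t t₁ p) = √p + sqrtExcess f x t t₁ := by
  have := sqrt_sub_sqrt_eq_of_hasDerivAt (g := (f x t t₁ ·)) (fun p hp => h.pos x t t₁ p hx ht hp)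
    (fun p hp => h.deriv_p_eq hx ht hp ▸
      (differentiableAt_slices (h.differentiableAt x t t₁ p hx ht hp)).2.2.2.hasDerivAt) hp one_pos
  rw [sqrt_one] at this
  rw [sqrtExcess]
  linarith

lemma sqrtExcess_nonneg (h : HasNIntegral_s14 ε n J f) (hx : x ∈ J) (ht : t < t₁) :
    0 ≤ sqrtExcess f x t t₁ :=
  nonneg_of_forall_sqrt_add_pos fun p hp =>
    h.sqrt_eq_sqrt_add hx ht hp ▸ sqrt_pos.2 (h.pos x t t₁ p hx ht hp)

lemma eq_sq_add_sqrtExcess {s : ℝ} (h : HasNIntegral_s14 ε n J f) (hx : x ∈ J) (ht : t < t₁)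
    (hs : 0 < s) :
    f x t t₁ (s ^ 2) = (s + sqrtExcess f x t t₁) ^ 2 := by
  have hs2 : 0 < s ^ 2 := by positivity
  rw [← sq_sqrt (h.pos x t t₁ _ hx ht hs2).le, h.sqrt_eq_sqrt_add hx ht hs2, sqrt_sq hs.le]

lemma exists_hasDerivAt_sqrtExcess (h : HasNIntegral_s14 ε n J f) (hJ : IsOpen J) (hx : x ∈ J)
    (ht : t < t₁) :
    ∃ gx gt gt₁ : ℝ, HasDerivAt (sqrtExcess f · t t₁) gx x ∧
      HasDerivAt (sqrtExcess f x · t₁) gt t ∧ HasDerivAt (sqrtExcess f x t ·) gt₁ t₁ ∧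
      gx + gt₁ * sqrtExcess f x t t₁ ^ 2 + sqrtExcess f x t t₁ / (x + ε * (n + 1)) = 0 ∧
      2 * sqrtExcess f x t t₁ * gt₁ + 1 / (x + ε * (n + 1)) - 1 / (x + ε * n) = 0 ∧
      gt + gt₁ = 0 := by
  obtain ⟨dx, dt, dt₁, -⟩ := differentiableAt_slices (h.differentiableAt x t t₁ 1 hx ht one_pos)
  have hf₁ := (h.pos x t t₁ 1 hx ht one_pos).ne'
  obtain ⟨gx, hgx⟩ : ∃ gx, HasDerivAt (sqrtExcess f · t t₁) gx x :=
    ⟨_, (dx.hasDerivAt.sqrt hf₁).sub_const 1⟩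
  obtain ⟨gt, hgt⟩ : ∃ gt, HasDerivAt (sqrtExcess f x · t₁) gt t :=
    ⟨_, (dt.hasDerivAt.sqrt hf₁).sub_const 1⟩
  obtain ⟨gt₁, hgt₁⟩ : ∃ gt₁, HasDerivAt (sqrtExcess f x t ·) gt₁ t₁ :=
    ⟨_, (dt₁.hasDerivAt.sqrt hf₁).sub_const 1⟩
  refine ⟨gx, gt, gt₁, hgx, hgt, hgt₁, coeffs_eq_zero_of_forall_pos fun s hs => ?_⟩
  set g := sqrtExcess f x t t₁
  have hp : 0 < s ^ 2 := by positivity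
  have hsqrt : √(f x t t₁ (s ^ 2)) = s + g := by rw [h.sqrt_eq_sqrt_add hx ht hp, sqrt_sq hs.le]
  have hsg : s + g ≠ 0 := hsqrt ▸ (sqrt_pos.2 (h.pos x t t₁ _ hx ht hp)).ne'
  have hfx : deriv (f · t t₁ (s ^ 2)) x = 2 * (s + g) * gx :=
    deriv_eq_of_eventuallyEq_sq hgx <| eventually_of_mem (hJ.mem_nhds hx)
      fun y hy => h.eq_sq_add_sqrtExcess hy ht hs
  have hft : deriv (f x · t₁ (s ^ 2)) t = 2 * (s + g) * gt :=
    deriv_eq_of_eventuallyEq_sq hgt <| eventually_of_mem (Iio_mem_nhds ht)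
      fun u hu => h.eq_sq_add_sqrtExcess hx hu hs
  have hft₁ : deriv (f x t · (s ^ 2)) t₁ = 2 * (s + g) * gt₁ :=
    deriv_eq_of_eventuallyEq_sq hgt₁ <| eventually_of_mem (Ioi_mem_nhds ht)
      fun u hu => h.eq_sq_add_sqrtExcess hx hu hs
  have hfs : f x t t₁ (s ^ 2) = (s + g) ^ 2 := h.eq_sq_add_sqrtExcess hx ht hs
  have h₀ := h.eq x t t₁ (s ^ 2) hx ht hp 0
  rw [hfx, hft, hft₁, hsqrt, hfs, sqrt_sq hs.le, mul_zero, add_zero, zero_div, zero_add,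
    show 2 * (s + g) * gx + 2 * (s + g) * gt * s ^ 2 + 2 * (s + g) * gt₁ * (s + g) ^ 2
      = 2 * (gx + gt * s ^ 2 + gt₁ * (s + g) ^ 2) * (s + g) by ring,
    mul_div_cancel_right₀ _ hsg] at h₀
  linear_combination h₀ / 2

lemma hasDerivAt_excessInvariant (h : HasNIntegral_s14 ε n J f) (hJ : IsOpen J) (hx : x ∈ J)
    (ht : t < t₁) (ha : x + ε * n ≠ 0) (hb : x + ε * (n + 1) ≠ 0) :
    HasDerivAt (excessInvariant ε n f · t t₁) 0 x ∧
      HasDerivAt (excessInvariant ε n f x · t₁) 0 t ∧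
      HasDerivAt (excessInvariant ε n f x t ·) 0 t₁ := by
  obtain ⟨gx, gt, gt₁, hgx, hgt, hgt₁, hcx, hct₁, hct⟩ :=
    h.exists_hasDerivAt_sqrtExcess hJ hx ht
  set g := sqrtExcess f x t t₁ with hg
  have hct₁' : 2 * g * gt₁ * ((x + ε * n) * (x + ε * (n + 1))) = ε := by
    field_simp at hct₁
    linear_combination hct₁
  have hcx' : gx * (x + ε * (n + 1)) + gt₁ * g ^ 2 * (x + ε * (n + 1)) + g = 0 := by
    field_simp at hcx
    linear_combination hcx
  refine ⟨?_, ?_, ?_⟩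
  · refine ((((hasDerivAt_id x).add_const _).mul ((hasDerivAt_id x).add_const _)).mul
      (hgx.pow 2) |>.sub_const _).congr_deriv ?_
    simp only [Pi.mul_apply, Pi.pow_apply, id, ← hg]
    linear_combination 2 * (x + ε * n) * g * hcx' - g ^ 2 * hct₁'
  · refine (((hgt.pow 2).const_mul _).sub (((hasDerivAt_id t).const_sub t₁).const_mul ε)
      |>.congr_deriv ?_)
    linear_combination 2 * g * ((x + ε * n) * (x + ε * (n + 1))) * hct - hct₁'
  · refine (((hgt₁.pow 2).const_mul _).sub (((hasDerivAt_id t₁).sub_const t).const_mul ε)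
      |>.congr_deriv ?_)
    linear_combination hct₁'

lemma excessInvariant_eq (h : HasNIntegral_s14 ε n J f) (hJ : IsOpen J) (hJc : J.OrdConnected)
    (hε : 0 < ε) (hJpos : ∀ x ∈ J, 0 < x + ε * n) {x' s s₁ : ℝ} (hx : x ∈ J) (hx' : x' ∈ J)
    (ht : t < t₁) (hs : s < s₁) :
    excessInvariant ε n f x t t₁ = excessInvariant ε n f x' s s₁ := by
  have hΦ {x t t₁ : ℝ} (hx : x ∈ J) (ht : t < t₁) :=
    have ha := hJpos x hx
    h.hasDerivAt_excessInvariant hJ hx ht ha.ne' (by linarith)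
  calc excessInvariant ε n f x t t₁ = excessInvariant ε n f x' t t₁ :=
        eq_of_hasDerivAt_zero hJ hJc.isPreconnected (fun z hz => (hΦ hz ht).1) hx hx'
    _ = excessInvariant ε n f x' s s₁ :=
        eq_of_hasDerivAt_zero_of_lt (fun _ _ h => (hΦ hx' h).2.1) (fun _ _ h => (hΦ hx' h).2.2)
          ht hs

lemma excessInvariant_nonneg (h : HasNIntegral_s14 ε n J f) (hJ : IsOpen J) (hJc : J.OrdConnected)
    (hε : 0 < ε) (hJpos : ∀ x ∈ J, 0 < x + ε * n) (hx : x ∈ J) (ht : t < t₁) :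
    0 ≤ excessInvariant ε n f x t t₁ := by
  refine le_of_forall_pos_le_add fun δ hδ => ?_
  have ha := hJpos x hx
  have hb : 0 < x + ε * (n + 1) := by linarith
  rw [h.excessInvariant_eq hJ hJc hε hJpos hx hx ht (div_pos hδ hε), excessInvariant,
    show ε * (δ / ε - 0) = δ by rw [sub_zero]; field_simp, sub_add_cancel]
  exact mul_nonneg (mul_pos ha hb).le (sq_nonneg _)

end HasNIntegral_s14

/-- every semi-discrete equation `t_{1x} = f` possessing the n-integral
`I = t_{xx}/√t_x + 2√t_x/(x+εn)` is of the form
`t_{1x} = (√t_x + √((ε(t₁-t)+C)/((x+εn)(x+ε(n+1)))))²`. -/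
theorem stmt_14 (ε : ℝ) (hε : 0 < ε) (n : ℤ) (J : Set ℝ)
    (hJ : IsOpen J) (hJc : J.OrdConnected)
    (hJpos : ∀ x ∈ J, 0 < x + ε * (n : ℝ))
    (f : ℝ → ℝ → ℝ → ℝ → ℝ)
    (hf : ContDiffOn ℝ 1 (fun v : ℝ × ℝ × ℝ × ℝ => f v.1 v.2.1 v.2.2.1 v.2.2.2)
      {v : ℝ × ℝ × ℝ × ℝ | v.1 ∈ J ∧ v.2.1 < v.2.2.1 ∧ 0 < v.2.2.2})
    (hpos : ∀ x t t₁ p : ℝ, x ∈ J → t < t₁ → 0 < p → 0 < f x t t₁ p)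
    (hI : ∀ x t t₁ p : ℝ, x ∈ J → t < t₁ → 0 < p → ∀ q : ℝ,
      (deriv (fun x' => f x' t t₁ p) x
        + deriv (fun u => f x u t₁ p) t * p
        + deriv (fun u => f x t u p) t₁ * f x t t₁ p
        + deriv (fun u => f x t t₁ u) p * q) / Real.sqrt (f x t t₁ p)
        + 2 * Real.sqrt (f x t t₁ p) / (x + ε * ((n : ℝ) + 1))
      = q / Real.sqrt p + 2 * Real.sqrt p / (x + ε * (n : ℝ))) :
    ∃ C : ℝ, 0 ≤ C ∧ ∀ x t t₁ p : ℝ, x ∈ J → t < t₁ → 0 < p →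
      (Real.sqrt (f x t t₁ p) - Real.sqrt p)^2
        = (ε * (t₁ - t) + C) / ((x + ε * (n : ℝ)) * (x + ε * ((n : ℝ) + 1))) ∧
      f x t t₁ p = (Real.sqrt p + Real.sqrt ((ε * (t₁ - t) + C)
        / ((x + ε * (n : ℝ)) * (x + ε * ((n : ℝ) + 1)))))^2 := by
  have h : HasNIntegral_s14 ε n J f := ⟨hpos, fun x t t₁ p hx ht hp =>
    (hf.differentiableOn one_ne_zero).differentiableAt
      ((isOpen_setOf_mem_and_lt_and_pos hJ).mem_nhds ⟨hx, ht, hp⟩), hI⟩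
  rcases J.eq_empty_or_nonempty with rfl | ⟨x₀, hx₀⟩
  · exact ⟨0, le_rfl, fun x _ _ _ hx => absurd hx (notMem_empty x)⟩
  refine ⟨excessInvariant ε n f x₀ 0 1, h.excessInvariant_nonneg hJ hJc hε hJpos hx₀ one_pos,
    fun x t t₁ p hx ht hp => ?_⟩
  have ha := hJpos x hx
  have hb : 0 < x + ε * (n + 1) := by linarith
  have hg : sqrtExcess f x t t₁ ^ 2 = (ε * (t₁ - t) + excessInvariant ε n f x₀ 0 1)
      / ((x + ε * n) * (x + ε * (n + 1))) := by
    rw [← h.excessInvariant_eq hJ hJc hε hJpos hx hx₀ ht one_pos, excessInvariant]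
    field_simp
    ring
  have hsqrt := h.sqrt_eq_sqrt_add hx ht hp
  refine ⟨by rw [hsqrt, add_sub_cancel_left, hg], ?_⟩
  rw [← hg, sqrt_sq (h.sqrtExcess_nonneg hx ht), ← hsqrt, sq_sqrt (hpos x t t₁ p hx ht hp).le]
end

section
/- Let f : ℝ⁵ → ℝ, with arguments written f(x, y, t, p, r), be continuously differentiable and satisfy, for all (x, y, t, p, r) ∈ ℝ⁵ and all q ∈ ℝ, the identity f_x + f_t·p + f_p·q + f_r·f − p·f = 0, where subscripts denote partial derivatives. Then there exists a function A : ℝ → ℝ such that f(x, y, t, p, r) = A(y)·e^t for all (x, y, t, p, r) ∈ ℝ⁵. (This is the statement that every hyperbolic equation t_{xy} = f(x, y, t, t_x, t_y) possessing the y-integral I = t_{xx} − (1/2)t_x² coincides, up to a point transformation in y, with the Liouville equation u_{xy} = e^u.) -/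
/-!
The identity is affine in `q`, so `f_p = 0`; with `p` gone it is affine in `p`, so `f_t = f`
and `f = c(x, y, r) eᵗ`. What remains, `c_x eᵗ + c_r c e²ᵗ = 0` for all `t`, forces `c_x = 0`
and `c c_r = 0`; the latter makes `c²` constant in `r`, hence `c` too.
-/

open Real

lemma eq_zero_of_add_mul_eq_zero {a b s₁ s₂ : ℝ} (hs : s₁ ≠ s₂) (h₁ : a + b * s₁ = 0)
    (h₂ : a + b * s₂ = 0) : a = 0 ∧ b = 0 := by
  have hb : b = 0 := by
    have : b * (s₁ - s₂) = 0 := by linear_combination h₁ - h₂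
    exact (mul_eq_zero.mp this).resolve_right (sub_ne_zero.mpr hs)
  subst hb
  exact ⟨by simpa using h₁, rfl⟩

lemma eq_mul_exp_of_deriv_eq_self {g : ℝ → ℝ} (hg : Differentiable ℝ g)
    (hg' : ∀ t, deriv g t = g t) (t : ℝ) : g t = g 0 * exp t := by
  have hderiv : ∀ s, deriv (fun s => g s * exp (-s)) s = 0 := by
    intro s
    exact ((hg' s ▸ (hg s).hasDerivAt).mul (hasDerivAt_neg s).exp).deriv.trans (by ring)
  have := is_const_of_deriv_eq_zero (f := fun s => g s * exp (-s)) (by fun_prop) hderiv t 0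
  simp only [neg_zero, exp_zero, mul_one] at this
  rw [← this, mul_assoc, ← exp_add, neg_add_cancel, exp_zero, mul_one]

lemma eq_of_deriv_mul_self_eq_zero {w : ℝ → ℝ} (hw : Differentiable ℝ w)
    (hw' : ∀ r, deriv w r * w r = 0) (r s : ℝ) : w r = w s := by
  have hsq : ∀ r, w r ^ 2 = w s ^ 2 := by
    refine fun r => is_const_of_deriv_eq_zero (hw.pow 2) (fun r => ?_) r s
    rw [((hw r).hasDerivAt.pow 2).deriv]
    linear_combination 2 * hw' r
  by_cases hs : w s = 0
  · rw [hs, ← pow_eq_zero_iff two_ne_zero, hsq r, hs, zero_pow two_ne_zero]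
  · have hne : ∀ r, w r ≠ 0 := fun r hr => hs (by simpa [hr, eq_comm] using hsq r)
    exact is_const_of_deriv_eq_zero hw (fun r => (mul_eq_zero.mp (hw' r)).resolve_right (hne r)) r s

/-- `D_y (t_xx - t_x² / 2) = 0` along the solutions of `t_xy = f(x, y, t, t_x, t_y)`, written
in the independent variables `p = t_x`, `q = t_xx`, `r = t_y`. -/
def HasLiouvilleYIntegral (f : ℝ → ℝ → ℝ → ℝ → ℝ → ℝ) : Prop :=
  ∀ x y t p r : ℝ, ∀ q : ℝ,
    deriv (fun u => f u y t p r) x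
      + deriv (fun u => f x y u p r) t * p
      + deriv (fun u => f x y t u r) p * q
      + deriv (fun u => f x y t p u) r * f x y t p r
      - p * f x y t p r = 0

namespace HasLiouvilleYIntegral

variable {f : ℝ → ℝ → ℝ → ℝ → ℝ → ℝ}

lemma apply_eq_apply_zero (hI : HasLiouvilleYIntegral f)
    (hdp : ∀ x y t r, Differentiable ℝ (fun u => f x y t u r)) (x y t p r : ℝ) :
    f x y t p r = f x y t 0 r :=
  is_const_of_deriv_eq_zero (hdp x y t r)
    (fun p => by linarith [hI x y t p r 0, hI x y t p r 1]) p 0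

lemma reduced_identity (hI : HasLiouvilleYIntegral f)
    (hdp : ∀ x y t r, Differentiable ℝ (fun u => f x y t u r)) (x y t r p : ℝ) :
    deriv (fun u => f u y t 0 r) x
      + deriv (fun u => f x y u 0 r) t * p
      + deriv (fun u => f x y t 0 u) r * f x y t 0 r
      - p * f x y t 0 r = 0 := by
  simpa only [hI.apply_eq_apply_zero hdp _ _ _ p, mul_zero, add_zero] using hI x y t p r 0

lemma deriv_t_eq_self (hI : HasLiouvilleYIntegral f)
    (hdp : ∀ x y t r, Differentiable ℝ (fun u => f x y t u r)) (x y t r : ℝ) :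
    deriv (fun u => f x y u 0 r) t = f x y t 0 r := by
  linarith [hI.reduced_identity hdp x y t r 0, hI.reduced_identity hdp x y t r 1]

lemma eq_mul_exp (hI : HasLiouvilleYIntegral f)
    (hdp : ∀ x y t r, Differentiable ℝ (fun u => f x y t u r))
    (hdt : ∀ x y p r, Differentiable ℝ (fun u => f x y u p r)) (x y t p r : ℝ) :
    f x y t p r = f x y 0 0 r * exp t := by
  rw [hI.apply_eq_apply_zero hdp]
  exact eq_mul_exp_of_deriv_eq_self (hdt x y 0 r) (hI.deriv_t_eq_self hdp x y · r) t

lemma deriv_x_add_deriv_r_mul_exp_eq_zero (hI : HasLiouvilleYIntegral f)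
    (hdx : ∀ y t p r, Differentiable ℝ (fun u => f u y t p r))
    (hdt : ∀ x y p r, Differentiable ℝ (fun u => f x y u p r))
    (hdp : ∀ x y t r, Differentiable ℝ (fun u => f x y t u r))
    (hdr : ∀ x y t p, Differentiable ℝ (fun u => f x y t p u)) (x y r t : ℝ) :
    deriv (fun u => f u y 0 0 r) x + deriv (fun u => f x y 0 0 u) r * f x y 0 0 r * exp t = 0 := by
  have h := hI.reduced_identity hdp x y t r 0
  have hx : (fun u => f u y t 0 r) = fun u => f u y 0 0 r * exp t :=
    funext fun u => hI.eq_mul_exp hdp hdt u y t 0 r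
  have hr : (fun u => f x y t 0 u) = fun u => f x y 0 0 u * exp t :=
    funext fun u => hI.eq_mul_exp hdp hdt x y t 0 u
  rw [hx, hr, deriv_mul_const (hdx y 0 0 r x), deriv_mul_const (hdr x y 0 0 r),
    hI.eq_mul_exp hdp hdt x y t 0 r] at h
  have : exp t * (deriv (fun u => f u y 0 0 r) x
      + deriv (fun u => f x y 0 0 u) r * f x y 0 0 r * exp t) = 0 := by
    linear_combination h
  exact (mul_eq_zero.mp this).resolve_left (exp_ne_zero t)

end HasLiouvilleYIntegral

/-- every hyperbolic equation `t_{xy} = f(x,y,t,t_x,t_y)` possessing the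
y-integral `I = t_{xx} - (1/2)t_x²` coincides with `t_{xy} = A(y) e^t`. -/
theorem stmt_15 (f : ℝ → ℝ → ℝ → ℝ → ℝ → ℝ)
    (hf : ContDiff ℝ 1
      (fun v : ℝ × ℝ × ℝ × ℝ × ℝ => f v.1 v.2.1 v.2.2.1 v.2.2.2.1 v.2.2.2.2))
    (hI : ∀ x y t p r : ℝ, ∀ q : ℝ,
      deriv (fun u => f u y t p r) x
        + deriv (fun u => f x y u p r) t * p
        + deriv (fun u => f x y t u r) p * q
        + deriv (fun u => f x y t p u) r * f x y t p r
        - p * f x y t p r = 0) :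
    ∃ A : ℝ → ℝ, ∀ x y t p r : ℝ, f x y t p r = A y * Real.exp t := by
  have hF := hf.differentiable one_ne_zero
  have hdp : ∀ x y t r, Differentiable ℝ (fun u => f x y t u r) := fun x y t r =>
    hF.comp (by fun_prop : Differentiable ℝ fun u : ℝ => (x, y, t, u, r))
  have hdx : ∀ y t p r, Differentiable ℝ (fun u => f u y t p r) := fun y t p r =>
    hF.comp (by fun_prop : Differentiable ℝ fun u : ℝ => (u, y, t, p, r))
  have hdt : ∀ x y p r, Differentiable ℝ (fun u => f x y u p r) := fun x y p r =>
    hF.comp (by fun_prop : Differentiable ℝ fun u : ℝ => (x, y, u, p, r))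
  have hdr : ∀ x y t p, Differentiable ℝ (fun u => f x y t p u) := fun x y t p =>
    hF.comp (by fun_prop : Differentiable ℝ fun u : ℝ => (x, y, t, p, u))
  have hI : HasLiouvilleYIntegral f := hI
  have hc : ∀ x y r, deriv (fun u => f u y 0 0 r) x = 0
      ∧ deriv (fun u => f x y 0 0 u) r * f x y 0 0 r = 0 := fun x y r =>
    have h := hI.deriv_x_add_deriv_r_mul_exp_eq_zero hdx hdt hdp hdr x y r
    eq_zero_of_add_mul_eq_zero (exp_injective.ne zero_ne_one) (h 0) (h 1)
  refine ⟨fun y => f 0 y 0 0 0, fun x y t p r => ?_⟩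
  rw [hI.eq_mul_exp hdp hdt,
    is_const_of_deriv_eq_zero (hdx y 0 0 r) (fun x => (hc x y r).1) x 0,
    eq_of_deriv_mul_self_eq_zero (hdr 0 y 0 0) (fun r => (hc 0 y r).2) r 0]
end

section
/- Let p : J → ℝ be a function on an open interval J ⊆ ℝ and let t₀, t₁ : J → ℝ be twice differentiable solutions of the ordinary differential equation t'' − (1/2)(t')² = p(x) on J. Let C₀, C₁ be real constants such that w(x) = C₀·e^{−t₀(x)/2} + C₁·e^{−t₁(x)/2} > 0 for all x ∈ J, and set t₃(x) = −2·log w(x). Then t₃ is twice differentiable and satisfies t₃''(x) − (1/2)(t₃'(x))² = p(x) for all x ∈ J. (Thus any two particular solutions t₀, t₁ form a fundamental system of solutions for the equation t_{xx} − (1/2)t_x² = p(x): its general solution is t₃ = −2 log(C₀ e^{−t₀/2} + C₁ e^{−t₁/2}).) -/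
/-- two particular solutions `t₀, t₁` of `t_{xx} - (1/2)t_x² = p(x)` form a
fundamental system: `t₃ = -2 log(C₀ e^{-t₀/2} + C₁ e^{-t₁/2})` is again a solution. -/
theorem stmt_17 (J : Set ℝ) (hJ : IsOpen J) (hJc : J.OrdConnected)
    (p t₀ t₁ : ℝ → ℝ) (C₀ C₁ : ℝ)
    (ht₀ : ∀ x ∈ J, DifferentiableAt ℝ t₀ x)
    (ht₀' : ∀ x ∈ J, DifferentiableAt ℝ (deriv t₀) x)
    (ht₁ : ∀ x ∈ J, DifferentiableAt ℝ t₁ x)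
    (ht₁' : ∀ x ∈ J, DifferentiableAt ℝ (deriv t₁) x)
    (heq₀ : ∀ x ∈ J, deriv (deriv t₀) x - (1/2) * (deriv t₀ x)^2 = p x)
    (heq₁ : ∀ x ∈ J, deriv (deriv t₁) x - (1/2) * (deriv t₁ x)^2 = p x)
    (hw : ∀ x ∈ J, 0 < C₀ * Real.exp (-(t₀ x) / 2) + C₁ * Real.exp (-(t₁ x) / 2))
    (t₃ : ℝ → ℝ)
    (ht₃ : ∀ x, t₃ x
      = -2 * Real.log (C₀ * Real.exp (-(t₀ x) / 2) + C₁ * Real.exp (-(t₁ x) / 2))) :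
    (∀ x ∈ J, DifferentiableAt ℝ t₃ x) ∧
    (∀ x ∈ J, DifferentiableAt ℝ (deriv t₃) x) ∧
    (∀ x ∈ J, deriv (deriv t₃) x - (1/2) * (deriv t₃ x)^2 = p x) := by
  set w : ℝ → ℝ := fun x => C₀ * Real.exp (-(t₀ x) / 2) + C₁ * Real.exp (-(t₁ x) / 2) with hwdef
  set w₁ : ℝ → ℝ := fun x =>
    C₀ * (Real.exp (-(t₀ x) / 2) * (-(deriv t₀ x) / 2)) +
    C₁ * (Real.exp (-(t₁ x) / 2) * (-(deriv t₁ x) / 2)) with hw₁def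
  set w₂ : ℝ → ℝ := fun x =>
    C₀ * ((Real.exp (-(t₀ x) / 2) * (-(deriv t₀ x) / 2)) * (-(deriv t₀ x) / 2)
          + Real.exp (-(t₀ x) / 2) * (-(deriv (deriv t₀) x) / 2)) +
    C₁ * ((Real.exp (-(t₁ x) / 2) * (-(deriv t₁ x) / 2)) * (-(deriv t₁ x) / 2)
          + Real.exp (-(t₁ x) / 2) * (-(deriv (deriv t₁) x) / 2)) with hw₂def
  have hwpos : ∀ x ∈ J, 0 < w x := hw
  -- derivatives of the exponentials
  have he₀ : ∀ x ∈ J, HasDerivAt (fun y => Real.exp (-(t₀ y) / 2))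
      (Real.exp (-(t₀ x) / 2) * (-(deriv t₀ x) / 2)) x := by
    intro x hx
    exact (((ht₀ x hx).hasDerivAt.neg).div_const 2).exp
  have he₁ : ∀ x ∈ J, HasDerivAt (fun y => Real.exp (-(t₁ y) / 2))
      (Real.exp (-(t₁ x) / 2) * (-(deriv t₁ x) / 2)) x := by
    intro x hx
    exact (((ht₁ x hx).hasDerivAt.neg).div_const 2).exp
  have hwD : ∀ x ∈ J, HasDerivAt w (w₁ x) x := by
    intro x hx
    exact ((he₀ x hx).const_mul C₀).add ((he₁ x hx).const_mul C₁)
  have hw₁D : ∀ x ∈ J, HasDerivAt w₁ (w₂ x) x := by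
    intro x hx
    have h₀ : HasDerivAt (fun y => Real.exp (-(t₀ y) / 2) * (-(deriv t₀ y) / 2))
        ((Real.exp (-(t₀ x) / 2) * (-(deriv t₀ x) / 2)) * (-(deriv t₀ x) / 2)
          + Real.exp (-(t₀ x) / 2) * (-(deriv (deriv t₀) x) / 2)) x :=
      (he₀ x hx).mul (((ht₀' x hx).hasDerivAt.neg).div_const 2)
    have h₁ : HasDerivAt (fun y => Real.exp (-(t₁ y) / 2) * (-(deriv t₁ y) / 2))
        ((Real.exp (-(t₁ x) / 2) * (-(deriv t₁ x) / 2)) * (-(deriv t₁ x) / 2)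
          + Real.exp (-(t₁ x) / 2) * (-(deriv (deriv t₁) x) / 2)) x :=
      (he₁ x hx).mul (((ht₁' x hx).hasDerivAt.neg).div_const 2)
    exact (h₀.const_mul C₀).add (h₁.const_mul C₁)
  have hw₂p : ∀ x ∈ J, w₂ x = -(p x) / 2 * w x := by
    intro x hx
    have h0 := heq₀ x hx
    have h1 := heq₁ x hx
    simp only [hw₂def, hwdef]
    linear_combination (-(C₀ * Real.exp (-(t₀ x) / 2)) / 2) * h0
      + (-(C₁ * Real.exp (-(t₁ x) / 2)) / 2) * h1
  -- t₃ and its first derivative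
  have ht₃fun : t₃ = fun y => -2 * Real.log (w y) := funext ht₃
  have ht₃D : ∀ x ∈ J, HasDerivAt t₃ (-2 * (w₁ x / w x)) x := by
    intro x hx
    rw [ht₃fun]
    exact ((hwD x hx).log (hwpos x hx).ne').const_mul (-2)
  have hderiv3 : ∀ x ∈ J, deriv t₃ x = -2 * (w₁ x / w x) := fun x hx =>
    (ht₃D x hx).deriv
  -- second derivative
  have hgD : ∀ x ∈ J, HasDerivAt (fun y => -2 * (w₁ y / w y))
      (-2 * ((w₂ x * w x - w₁ x * w₁ x) / (w x) ^ 2)) x := by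
    intro x hx
    exact (((hw₁D x hx).div (hwD x hx) (hwpos x hx).ne')).const_mul (-2)
  have hdd : ∀ x ∈ J, HasDerivAt (deriv t₃)
      (-2 * ((w₂ x * w x - w₁ x * w₁ x) / (w x) ^ 2)) x := by
    intro x hx
    apply (hgD x hx).congr_of_eventuallyEq
    filter_upwards [hJ.mem_nhds hx] with y hy
    exact hderiv3 y hy
  refine ⟨fun x hx => (ht₃D x hx).differentiableAt,
    fun x hx => (hdd x hx).differentiableAt, fun x hx => ?_⟩
  rw [(hdd x hx).deriv, hderiv3 x hx, hw₂p x hx]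
  have hwne : w x ≠ 0 := (hwpos x hx).ne'
  field_simp
  ring
end

section
/- Let p : J → ℝ be a function on an open interval J ⊆ ℝ and let t, t₁, t₂ : J → ℝ be differentiable solutions of the ordinary differential equation t' − e^t = p(x) on J. Let c₀ be a real constant, and define N(x) = c₀·e^{t(x)}(e^{t₁(x)} − e^{t₂(x)}) + e^{t₁(x)}(e^{t(x)} − e^{t₂(x)}) and W(x) = (e^{t(x)} − e^{t₂(x)}) + c₀·(e^{t₁(x)} − e^{t₂(x)}). Assume N(x) > 0 and W(x) > 0 for all x ∈ J, and set t₃(x) = log(N(x)/W(x)). Then t₃ is differentiable and satisfies t₃'(x) − e^{t₃(x)} = p(x) for all x ∈ J. (Thus three particular solutions t, t₁, t₂ form a fundamental system of solutions for the equation t_x − e^t = p(x), with general solution given by e^{t₃} = (c₀ e^t(e^{t₁} − e^{t₂}) + e^{t₁}(e^t − e^{t₂}))/((e^t − e^{t₂}) + c₀(e^{t₁} − e^{t₂})).) -/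
/-- three particular solutions `t, t₁, t₂` of `t_x - e^t = p(x)` form a
fundamental system: `t₃ = log(N/W)` is again a solution, where
`N = c₀ e^t(e^{t₁} - e^{t₂}) + e^{t₁}(e^t - e^{t₂})` and
`W = (e^t - e^{t₂}) + c₀(e^{t₁} - e^{t₂})`. -/
theorem stmt_18 (J : Set ℝ) (hJ : IsOpen J) (hJc : J.OrdConnected)
    (p t t₁ t₂ : ℝ → ℝ) (c₀ : ℝ)
    (ht : ∀ x ∈ J, DifferentiableAt ℝ t x)
    (ht₁ : ∀ x ∈ J, DifferentiableAt ℝ t₁ x)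
    (ht₂ : ∀ x ∈ J, DifferentiableAt ℝ t₂ x)
    (heq : ∀ x ∈ J, deriv t x - Real.exp (t x) = p x)
    (heq₁ : ∀ x ∈ J, deriv t₁ x - Real.exp (t₁ x) = p x)
    (heq₂ : ∀ x ∈ J, deriv t₂ x - Real.exp (t₂ x) = p x)
    (N W : ℝ → ℝ)
    (hN : ∀ x, N x = c₀ * Real.exp (t x) * (Real.exp (t₁ x) - Real.exp (t₂ x))
      + Real.exp (t₁ x) * (Real.exp (t x) - Real.exp (t₂ x)))
    (hW : ∀ x, W x = (Real.exp (t x) - Real.exp (t₂ x))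
      + c₀ * (Real.exp (t₁ x) - Real.exp (t₂ x)))
    (hNpos : ∀ x ∈ J, 0 < N x)
    (hWpos : ∀ x ∈ J, 0 < W x)
    (t₃ : ℝ → ℝ)
    (ht₃ : ∀ x, t₃ x = Real.log (N x / W x)) :
    (∀ x ∈ J, DifferentiableAt ℝ t₃ x) ∧
    (∀ x ∈ J, deriv t₃ x - Real.exp (t₃ x) = p x) := by
  have main : ∀ x ∈ J, HasDerivAt t₃ (p x + N x / W x) x := by
    intro x hx
    have hN0 := (hNpos x hx).ne'
    have hW0 := (hWpos x hx).ne'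
    have hta : HasDerivAt t (p x + Real.exp (t x)) x := by
      have h := (ht x hx).hasDerivAt
      have : deriv t x = p x + Real.exp (t x) := by linarith [heq x hx]
      rwa [this] at h
    have ht1a : HasDerivAt t₁ (p x + Real.exp (t₁ x)) x := by
      have h := (ht₁ x hx).hasDerivAt
      have : deriv t₁ x = p x + Real.exp (t₁ x) := by linarith [heq₁ x hx]
      rwa [this] at h
    have ht2a : HasDerivAt t₂ (p x + Real.exp (t₂ x)) x := by
      have h := (ht₂ x hx).hasDerivAt
      have : deriv t₂ x = p x + Real.exp (t₂ x) := by linarith [heq₂ x hx]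
      rwa [this] at h
    have ha : HasDerivAt (fun y => Real.exp (t y))
        ((p x + Real.exp (t x)) * Real.exp (t x)) x := by
      simpa [mul_comm] using hta.exp
    have hb : HasDerivAt (fun y => Real.exp (t₁ y))
        ((p x + Real.exp (t₁ x)) * Real.exp (t₁ x)) x := by
      simpa [mul_comm] using ht1a.exp
    have hc : HasDerivAt (fun y => Real.exp (t₂ y))
        ((p x + Real.exp (t₂ x)) * Real.exp (t₂ x)) x := by
      simpa [mul_comm] using ht2a.exp
    set A := Real.exp (t x) with hA
    set B := Real.exp (t₁ x) with hB
    set C := Real.exp (t₂ x) with hC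
    set A' := (p x + A) * A with hA'
    set B' := (p x + B) * B with hB'
    set C' := (p x + C) * C with hC'
    have hNfun : N = fun y => c₀ * Real.exp (t y) * (Real.exp (t₁ y) - Real.exp (t₂ y))
        + Real.exp (t₁ y) * (Real.exp (t y) - Real.exp (t₂ y)) := funext hN
    have hWfun : W = fun y => (Real.exp (t y) - Real.exp (t₂ y))
        + c₀ * (Real.exp (t₁ y) - Real.exp (t₂ y)) := funext hW
    have hNd : HasDerivAt N (c₀ * A' * (B - C) + c₀ * A * (B' - C')
        + (B' * (A - C) + B * (A' - C'))) x := by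
      rw [hNfun]
      exact ((ha.const_mul c₀).mul (hb.sub hc)).add (hb.mul (ha.sub hc))
    have hWd : HasDerivAt W ((A' - C') + c₀ * (B' - C')) x := by
      rw [hWfun]
      exact (ha.sub hc).add ((hb.sub hc).const_mul c₀)
    have hlog : HasDerivAt (fun y => Real.log (N y) - Real.log (W y))
        ((c₀ * A' * (B - C) + c₀ * A * (B' - C') + (B' * (A - C) + B * (A' - C'))) / N x
          - ((A' - C') + c₀ * (B' - C')) / W x) x :=
      (hNd.log hN0).sub (hWd.log hW0)
    have hEq : t₃ =ᶠ[nhds x] fun y => Real.log (N y) - Real.log (W y) := by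
      filter_upwards [hJ.mem_nhds hx] with y hy
      rw [ht₃ y, Real.log_div (hNpos y hy).ne' (hWpos y hy).ne']
    have ht₃d := hlog.congr_of_eventuallyEq hEq
    have hval : (c₀ * A' * (B - C) + c₀ * A * (B' - C') + (B' * (A - C) + B * (A' - C'))) / N x
        - ((A' - C') + c₀ * (B' - C')) / W x = p x + N x / W x := by
      rw [hN x, hW x, ← hA, ← hB, ← hC] at *
      rw [hA', hB', hC']
      have hN0' : c₀ * A * (B - C) + B * (A - C) ≠ 0 := hN0
      have hW0' : (A - C) + c₀ * (B - C) ≠ 0 := hW0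
      field_simp
      ring
    rwa [hval] at ht₃d
  constructor
  · intro x hx
    exact (main x hx).differentiableAt
  · intro x hx
    have hd := (main x hx).deriv
    have he : Real.exp (t₃ x) = N x / W x := by
      rw [ht₃ x, Real.exp_log (div_pos (hNpos x hx) (hWpos x hx))]
    rw [hd, he]
    ring
end

section
/- Let p : J → ℝ be a function on an open interval J ⊆ ℝ and let t : J → ℝ be a twice differentiable solution of the ordinary differential equation t''/t' − t' = p(x) on J with t'(x) ≠ 0 for all x ∈ J. Let c₀, c₁ be real constants with c₁ ≠ 0 such that w(x) = c₀ + c₁·e^{−t(x)} > 0 for all x ∈ J, and set t₂(x) = −log w(x). Then t₂ is twice differentiable, t₂'(x) ≠ 0, and t₂''(x)/t₂'(x) − t₂'(x) = p(x) for all x ∈ J. (Thus a single particular solution t yields, via e^{−t₂} = c₀ + c₁ e^{−t} with two arbitrary constants c₀, c₁, the general solution of the equation t_{xx}/t_x − t_x = p(x).) -/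
/-!
Substituting `u = e^{-t}` linearises the equation: for `t = -log u` one has
`t''/t' - t' = u''/u'`, so `t` solves it iff `u'' = p u'`. This linear equation is invariant
under `u ↦ c₀ + c₁ u` with `c₁ ≠ 0`, and `t₂ = -log (c₀ + c₁ u)`.
-/

open Real Set Filter

section NegLog

variable {s : Set ℝ} {u : ℝ → ℝ}

theorem deriv_neg_log_eqOn (hu : ∀ x ∈ s, DifferentiableAt ℝ u x) (hu₀ : ∀ x ∈ s, u x ≠ 0) :
    EqOn (deriv fun y => -log (u y)) (fun y => -logDeriv u y) s := fun x hx => by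
  rw [deriv.fun_neg, deriv.log (hu x hx) (hu₀ x hx)]
  rfl

theorem hasDerivAt_neg_logDeriv {x : ℝ} (hu : DifferentiableAt ℝ u x)
    (hu' : DifferentiableAt ℝ (deriv u) x) (hu₀ : u x ≠ 0) :
    HasDerivAt (fun y => -logDeriv u y)
      (-((deriv (deriv u) x * u x - deriv u x * deriv u x) / u x ^ 2)) x :=
  (hu'.hasDerivAt.div hu.hasDerivAt hu₀).neg

theorem differentiableAt_deriv_neg_log (hs : IsOpen s) (hu : ∀ x ∈ s, DifferentiableAt ℝ u x)
    (hu' : ∀ x ∈ s, DifferentiableAt ℝ (deriv u) x) (hu₀ : ∀ x ∈ s, u x ≠ 0) {x : ℝ} (hx : x ∈ s) :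
    DifferentiableAt ℝ (deriv fun y => -log (u y)) x :=
  (hasDerivAt_neg_logDeriv (hu x hx) (hu' x hx) (hu₀ x hx)).differentiableAt.congr_of_eventuallyEq
    (eventuallyEq_of_mem (hs.mem_nhds hx) (deriv_neg_log_eqOn hu hu₀))

theorem logDeriv_deriv_neg_log_sub (hs : IsOpen s) (hu : ∀ x ∈ s, DifferentiableAt ℝ u x)
    (hu' : ∀ x ∈ s, DifferentiableAt ℝ (deriv u) x) (hu₀ : ∀ x ∈ s, u x ≠ 0) {x : ℝ} (hx : x ∈ s)
    (hu'₀ : deriv u x ≠ 0) :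
    logDeriv (deriv fun y => -log (u y)) x - deriv (fun y => -log (u y)) x =
      logDeriv (deriv u) x := by
  have hEq := eventuallyEq_of_mem (hs.mem_nhds hx) (deriv_neg_log_eqOn hu hu₀)
  rw [logDeriv_apply, hEq.deriv_eq, (hasDerivAt_neg_logDeriv (hu x hx) (hu' x hx) (hu₀ x hx)).deriv,
    hEq.eq_of_nhds, logDeriv_apply, logDeriv_apply]
  have hux := hu₀ x hx
  field_simp
  ring

end NegLog

section ExpNeg

variable {s : Set ℝ} {t : ℝ → ℝ}

theorem deriv_exp_neg_eqOn (ht : ∀ x ∈ s, DifferentiableAt ℝ t x) :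
    EqOn (deriv fun y => exp (-t y)) (fun y => exp (-t y) * -deriv t y) s := fun x hx => by
  rw [_root_.deriv_exp (ht x hx).fun_neg, deriv.fun_neg]

theorem differentiableAt_deriv_exp_neg (hs : IsOpen s) (ht : ∀ x ∈ s, DifferentiableAt ℝ t x)
    (ht' : ∀ x ∈ s, DifferentiableAt ℝ (deriv t) x) {x : ℝ} (hx : x ∈ s) :
    DifferentiableAt ℝ (deriv fun y => exp (-t y)) x :=
  ((ht x hx).neg.exp.mul (ht' x hx).neg).congr_of_eventuallyEq
    (eventuallyEq_of_mem (hs.mem_nhds hx) (deriv_exp_neg_eqOn ht))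

end ExpNeg

theorem logDeriv_deriv_const_add_const_mul {𝕜 : Type*} [NontriviallyNormedField 𝕜]
    (c₀ : 𝕜) {c₁ : 𝕜} (hc₁ : c₁ ≠ 0) (u : 𝕜 → 𝕜) (x : 𝕜) :
    logDeriv (deriv fun y => c₀ + c₁ * u y) x = logDeriv (deriv u) x := by
  rw [deriv_const_add', deriv_const_mul_field', logDeriv_const_mul x c₁ hc₁]

theorem stmt_19_general (J : Set ℝ) (hJ : IsOpen J)
    (p t : ℝ → ℝ) (c₀ c₁ : ℝ) (hc₁ : c₁ ≠ 0)
    (ht : ∀ x ∈ J, DifferentiableAt ℝ t x)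
    (ht' : ∀ x ∈ J, DifferentiableAt ℝ (deriv t) x)
    (htne : ∀ x ∈ J, deriv t x ≠ 0)
    (heq : ∀ x ∈ J, deriv (deriv t) x / deriv t x - deriv t x = p x)
    (hw : ∀ x ∈ J, 0 < c₀ + c₁ * Real.exp (-(t x)))
    (t₂ : ℝ → ℝ)
    (ht₂ : ∀ x, t₂ x = -Real.log (c₀ + c₁ * Real.exp (-(t x)))) :
    (∀ x ∈ J, DifferentiableAt ℝ t₂ x) ∧
    (∀ x ∈ J, DifferentiableAt ℝ (deriv t₂) x) ∧
    (∀ x ∈ J, deriv t₂ x ≠ 0) ∧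
    (∀ x ∈ J, deriv (deriv t₂) x / deriv t₂ x - deriv t₂ x = p x) := by
  set u : ℝ → ℝ := fun y => exp (-t y)
  set w : ℝ → ℝ := fun y => c₀ + c₁ * u y
  have ht_eq : t = fun y => -log (u y) := funext fun y => by simp [u]
  obtain rfl : t₂ = fun y => -log (w y) := funext ht₂
  have hu : ∀ x ∈ J, DifferentiableAt ℝ u x := fun x hx => (ht x hx).neg.exp
  have hu' : ∀ x ∈ J, DifferentiableAt ℝ (deriv u) x := fun x hx =>
    differentiableAt_deriv_exp_neg hJ ht ht' hx
  have hu₀ : ∀ x ∈ J, u x ≠ 0 := fun x _ => (exp_pos _).ne'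
  have hu'₀ : ∀ x ∈ J, deriv u x ≠ 0 := fun x hx => by
    rw [deriv_exp_neg_eqOn ht hx]
    exact mul_ne_zero (hu₀ x hx) (neg_ne_zero.2 (htne x hx))
  have hdw : deriv w = fun y => c₁ * deriv u y := by rw [deriv_const_add', deriv_const_mul_field']
  have hw₁ : ∀ x ∈ J, DifferentiableAt ℝ w x := fun x hx => ((hu x hx).const_mul c₁).const_add c₀
  have hw₂ : ∀ x ∈ J, DifferentiableAt ℝ (deriv w) x := fun x hx => hdw ▸ (hu' x hx).const_mul c₁
  have hw₀ : ∀ x ∈ J, w x ≠ 0 := fun x hx => (hw x hx).ne'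
  have hw'₀ : ∀ x ∈ J, deriv w x ≠ 0 := fun x hx => hdw ▸ mul_ne_zero hc₁ (hu'₀ x hx)
  refine ⟨fun x hx => ((hw₁ x hx).log (hw₀ x hx)).neg, fun x hx =>
    differentiableAt_deriv_neg_log hJ hw₁ hw₂ hw₀ hx, fun x hx => ?_, fun x hx => ?_⟩
  · rw [deriv_neg_log_eqOn hw₁ hw₀ hx]
    exact neg_ne_zero.2 (div_ne_zero (hw'₀ x hx) (hw₀ x hx))
  · calc logDeriv (deriv fun y => -log (w y)) x - deriv (fun y => -log (w y)) x
        = logDeriv (deriv u) x := by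
          rw [logDeriv_deriv_neg_log_sub hJ hw₁ hw₂ hw₀ hx (hw'₀ x hx),
            logDeriv_deriv_const_add_const_mul c₀ hc₁]
      _ = logDeriv (deriv t) x - deriv t x := by
          rw [ht_eq, logDeriv_deriv_neg_log_sub hJ hu hu' hu₀ hx (hu'₀ x hx)]
      _ = p x := heq x hx

/-- a single particular solution `t` of `t_{xx}/t_x - t_x = p(x)` yields its
general solution via `e^{-t₂} = c₀ + c₁ e^{-t}` with two arbitrary constants. -/
theorem stmt_19 (J : Set ℝ) (hJ : IsOpen J) (hJc : J.OrdConnected)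
    (p t : ℝ → ℝ) (c₀ c₁ : ℝ) (hc₁ : c₁ ≠ 0)
    (ht : ∀ x ∈ J, DifferentiableAt ℝ t x)
    (ht' : ∀ x ∈ J, DifferentiableAt ℝ (deriv t) x)
    (htne : ∀ x ∈ J, deriv t x ≠ 0)
    (heq : ∀ x ∈ J, deriv (deriv t) x / deriv t x - deriv t x = p x)
    (hw : ∀ x ∈ J, 0 < c₀ + c₁ * Real.exp (-(t x)))
    (t₂ : ℝ → ℝ)
    (ht₂ : ∀ x, t₂ x = -Real.log (c₀ + c₁ * Real.exp (-(t x)))) :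
    (∀ x ∈ J, DifferentiableAt ℝ t₂ x) ∧
    (∀ x ∈ J, DifferentiableAt ℝ (deriv t₂) x) ∧
    (∀ x ∈ J, deriv t₂ x ≠ 0) ∧
    (∀ x ∈ J, deriv (deriv t₂) x / deriv t₂ x - deriv t₂ x = p x) :=
  stmt_19_general J hJ p t c₀ c₁ hc₁ ht ht' htne heq hw t₂ ht₂
end
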